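/- arXiv:1503.04235 — 7 statements merged into one kernel-verified Lean document; each statement's English description precedes it below -/
import Mathlib

section
/- Let p be a prime, s ≥ 1, and let k be a field of characteristic different from p containing a primitive p^s-th root of unity ζ. Let a_1, …, a_d be integers with a_1 = 1, and let σ be the k-algebra automorphism of the Laurent polynomial ring k[x_1^{±1},…,x_d^{±1}] determined by σ(x_i) = ζ^{a_i} x_i for each i. Then the ring of invariants k[x_1^{±1},…,x_d^{±1}]^{⟨σ⟩} equals the k-subalgebra generated by the elements x_1^{p^s}, x_2 x_1^{−a_2}, …, x_d x_1^{−a_d} together with their inverses. -/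
open AlgebraicGeometry CategoryTheory TopologicalSpace

noncomputable section

/-- The class of linear schemes over a field `k`: the smallest class of (separated, finite
type) `k`-schemes containing the affine spaces `𝔸ⁿ_k`, closed under passing from a scheme `X`
with a closed subscheme `Z` (both in the class) to the open complement `X - Z`, closed under
passing from `X - Z` and `Z` (both in the class) to `X`, and closed under isomorphism. -/
inductive IsLinearScheme (k : Type) [Field k] : Scheme.{0} → Prop
  | affineSpace (n : ℕ) :
      IsLinearScheme k (Spec (CommRingCat.of (MvPolynomial (Fin n) k)))
  | of_iso {X Y : Scheme.{0}} (e : X ≅ Y) : IsLinearScheme k X → IsLinearScheme k Y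
  | openCompl {Z X : Scheme.{0}} (f : Z ⟶ X) (hf : IsClosedImmersion f)
      (hc : IsClosed (Set.range f.base))
      (hX : IsLinearScheme k X) (hZ : IsLinearScheme k Z) :
      IsLinearScheme k (Scheme.Opens.toScheme (X := X) ⟨(Set.range f.base)ᶜ, hc.isOpen_compl⟩)
  | ofOpenCompl {Z X : Scheme.{0}} (f : Z ⟶ X) (hf : IsClosedImmersion f)
      (hc : IsClosed (Set.range f.base))
      (hU : IsLinearScheme k
        (Scheme.Opens.toScheme (X := X) ⟨(Set.range f.base)ᶜ, hc.isOpen_compl⟩))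
      (hZ : IsLinearScheme k Z) : IsLinearScheme k X

/-- The subalgebra of elements fixed by every `k`-algebra automorphism in `S`. -/
def fixedSubalgebra (k : Type) {A : Type} [CommSemiring k] [CommSemiring A] [Algebra k A]
    (S : Set (A ≃ₐ[k] A)) : Subalgebra k A where
  carrier := {x | ∀ σ ∈ S, σ x = x}
  mul_mem' := fun ha hb σ hσ => by rw [map_mul, ha σ hσ, hb σ hσ]
  one_mem' := fun σ _ => map_one σ
  add_mem' := fun ha hb σ hσ => by rw [map_add, ha σ hσ, hb σ hσ]
  zero_mem' := fun σ _ => map_zero σ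
  algebraMap_mem' := fun r σ _ => σ.commutes r

/-- The Laurent polynomial ring `k[x₁^{±1}, …, x_d^{±1}]` in `d` variables over `k`,
realized as the group algebra of `ℤ^d`; it is isomorphic to the localization of the
polynomial ring `k[x₁, …, x_d]` at `x₁ ⋯ x_d`. -/
abbrev LaurentRing (k : Type) [CommRing k] (d : ℕ) : Type :=
  AddMonoidAlgebra k (Fin d →₀ ℤ)

/-- The Laurent monomial with exponent vector `e`. -/
def lMono {k : Type} [CommRing k] {d : ℕ} (e : Fin d →₀ ℤ) : LaurentRing k d :=
  AddMonoidAlgebra.single e 1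

/-- The `i`-th variable `x_i` of the Laurent polynomial ring. -/
def lX {k : Type} [CommRing k] {d : ℕ} (i : Fin d) : LaurentRing k d :=
  lMono (Finsupp.single i 1)

/-! `σ` scales each monomial `x^e` by `ζ ^ ⟨a, e⟩`, where `⟨a, e⟩ = ∑ aᵢ eᵢ`, so an element is
invariant exactly when its support lies in the lattice `{e | p ^ s ∣ ⟨a, e⟩}`. The identity
`e = ∑ᵢ eᵢ (εᵢ - aᵢ ε₁) + ⟨a, e⟩ ε₁` in `ℤ^d` shows that this lattice is generated by `p ^ s ε₁` and
the `εᵢ - aᵢ ε₁` (the term `i = 1` vanishes as `a₁ = 1`), so its monomials are products of the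
listed generators and their inverses. -/

theorem mem_fixedSubalgebra_closure_singleton_iff {k A : Type} [CommSemiring k] [CommSemiring A]
    [Algebra k A] {σ : A ≃ₐ[k] A} {x : A} :
    x ∈ fixedSubalgebra k (Subgroup.closure {σ} : Subgroup (A ≃ₐ[k] A)).carrier ↔ σ x = x := by
  refine ⟨fun h => h σ (Subgroup.subset_closure rfl), fun h τ hτ => ?_⟩
  have hσ : σ ∈ MulAction.stabilizer (A ≃ₐ[k] A) x := h
  exact (Subgroup.closure_le _).2 (Set.singleton_subset_iff.2 hσ) hτ

namespace AddMonoidAlgebra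

variable {k G F : Type*}

section AddMonoid

variable [CommSemiring k] [AddMonoid G] [FunLike F k[G] k[G]] [AlgHomClass F k k[G] k[G]]

theorem coeff_apply_of_map_single (σ : F) (χ : G → k)
    (hσ : ∀ g, σ (single g 1) = χ g • single g 1) (x : k[G]) (g : G) :
    (σ x).coeff g = χ g * x.coeff g := by
  induction x using induction_linear with
  | zero => simp
  | add x y hx hy => simp [hx, hy, mul_add]
  | single h c =>
    rw [← mul_one c, ← smul_single', map_smul, hσ, smul_smul, smul_single', mul_one]
    by_cases hg : h = g
    · subst hg; simp [mul_comm]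
    · simp [hg]

theorem map_eq_self_iff_of_map_single [IsDomain k] (σ : F) (χ : G → k)
    (hσ : ∀ g, σ (single g 1) = χ g • single g 1) (x : k[G]) :
    σ x = x ↔ ∀ g ∈ x.coeff.support, χ g = 1 := by
  simp only [← coeff_inj, Finsupp.ext_iff, coeff_apply_of_map_single σ χ hσ,
    Finsupp.mem_support_iff]
  exact forall_congr' fun g => ⟨fun h hg => (mul_eq_right₀ hg).1 h,
    fun h => by by_cases hg : x.coeff g = 0 <;> simp_all⟩

theorem mem_of_coeff_support_subset {B : Subalgebra k k[G]} {H : Set G}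
    (hH : ∀ g ∈ H, single g 1 ∈ B) {x : k[G]} (hx : ↑x.coeff.support ⊆ H) : x ∈ B :=
  Algebra.adjoin_le (Set.image_subset_iff.2 fun g hg => hH g (hx hg)) (mem_adjoin_support x)

end AddMonoid

section AddGroup

variable [AddGroup G]

theorem single_mul_single_neg [Semiring k] (g : G) : (single g 1 : k[G]) * single (-g) 1 = 1 := by
  rw [single_mul_single, add_neg_cancel, mul_one, one_def]

theorem single_neg_mul_single [Semiring k] (g : G) : (single (-g) 1 : k[G]) * single g 1 = 1 := by
  rw [single_mul_single, neg_add_cancel, mul_one, one_def]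

theorem map_single_of_closure_eq_top [CommSemiring k] [FunLike F k[G] k[G]]
    [AlgHomClass F k k[G] k[G]] {S : Set G} (hS : AddSubgroup.closure S = ⊤)
    (σ : F) (χ : AddChar G k)
    (hσ : ∀ g ∈ S, σ (single g 1) = χ g • single g 1) (g : G) :
    σ (single g 1) = χ g • single g 1 := by
  have hg : g ∈ AddSubgroup.closure S := hS ▸ AddSubgroup.mem_top g
  induction hg using AddSubgroup.closure_induction with
  | mem g hg => exact hσ g hg
  | zero => rw [← one_def, map_one, AddChar.map_zero_eq_one, one_smul]
  | add g h _ _ ihg ihh =>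
    rw [← mul_one (1 : k), ← single_mul_single, map_mul, ihg, ihh, smul_mul_smul_comm,
      single_mul_single, mul_one, AddChar.map_add_eq_mul]
  | neg g _ ih =>
    calc σ (single (-g) 1)
        = σ (single (-g) 1) * (σ (single g 1) * (χ (-g) • single (-g) 1)) := by
          rw [ih, smul_mul_smul_comm, ← AddChar.map_add_eq_mul, add_neg_cancel,
            AddChar.map_zero_eq_one, one_smul, single_mul_single_neg, mul_one]
      _ = χ (-g) • single (-g) 1 := by
          rw [← mul_assoc, ← map_mul, single_neg_mul_single, map_one, one_mul]

end AddGroup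

theorem single_one_mem_of_mem_closure [CommSemiring k] [AddCommGroup G] {B : Subalgebra k k[G]}
    {S : Set G} (hS : ∀ g ∈ S, single g 1 ∈ B ∧ single (-g) 1 ∈ B) {g : G}
    (hg : g ∈ AddSubgroup.closure S) : single g 1 ∈ B := by
  suffices single g 1 ∈ B ∧ single (-g) 1 ∈ B from this.1
  induction hg using AddSubgroup.closure_induction with
  | mem g hg => exact hS g hg
  | zero => simp [← one_def, B.one_mem]
  | add g h _ _ ihg ihh =>
    have hmul : ∀ g h : G, (single (g + h) 1 : k[G]) = single g 1 * single h 1 := by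
      simp [single_mul_single]
    exact ⟨hmul g h ▸ B.mul_mem ihg.1 ihh.1,
      neg_add g h ▸ hmul (-g) (-h) ▸ B.mul_mem ihg.2 ihh.2⟩
  | neg g _ ih => exact ⟨ih.2, (neg_neg g).symm ▸ ih.1⟩

end AddMonoidAlgebra

namespace Finsupp

variable {ι : Type*}

theorem addSubgroupClosure_range_single_one :
    AddSubgroup.closure (Set.range fun i : ι => single i (1 : ℤ)) = ⊤ := by
  rw [← Submodule.span_int_eq_addSubgroupClosure, ← coe_basisSingleOne, Module.Basis.span_eq,
    Submodule.top_toAddSubgroup]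

theorem eq_sum_smul_sub_single_add_single (a : ι → ℤ) (i₀ : ι) (e : ι →₀ ℤ) :
    e = (e.sum fun i c => c • (single i 1 - single i₀ (a i))) +
      single i₀ (linearCombination ℤ a e) := by
  simp only [smul_sub, smul_single, smul_eq_mul, mul_one, sum_sub, sum_single,
    linearCombination_apply, ← single_sum, sub_add_cancel]

theorem mem_addSubgroupClosure_of_dvd_linearCombination (a : ι → ℤ) (i₀ : ι) {n : ℤ}
    {e : ι →₀ ℤ} (h : n ∣ linearCombination ℤ a e) :
    e ∈ AddSubgroup.closure
      (insert (single i₀ n) (Set.range fun i => single i 1 - single i₀ (a i))) := by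
  obtain ⟨m, hm⟩ := h
  rw [eq_sum_smul_sub_single_add_single a i₀ e, hm, mul_comm, ← smul_eq_mul, ← smul_single]
  refine add_mem (sum_mem fun i _ => zsmul_mem (AddSubgroup.subset_closure ?_) _)
    (zsmul_mem (AddSubgroup.subset_closure (Set.mem_insert _ _)) _)
  exact Set.mem_insert_of_mem _ (Set.mem_range_self i)

end Finsupp

def weightChar {ι M : Type*} [GroupWithZero M] (ζ : M) (hζ : ζ ≠ 0) (a : ι → ℤ) :
    AddChar (ι →₀ ℤ) M where
  toFun e := ζ ^ Finsupp.linearCombination ℤ a e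
  map_zero_eq_one' := by rw [map_zero, zpow_zero]
  map_add_eq_mul' e f := by rw [map_add, zpow_add₀ hζ]

@[simp]
theorem weightChar_apply {ι M : Type*} [GroupWithZero M] (ζ : M) (hζ : ζ ≠ 0) (a : ι → ℤ)
    (e : ι →₀ ℤ) : weightChar ζ hζ a e = ζ ^ Finsupp.linearCombination ℤ a e :=
  rfl

section Laurent

variable {k : Type} [Field k] {d : ℕ}

theorem map_lMono_of_map_lX {F : Type*} [FunLike F (LaurentRing k d) (LaurentRing k d)]
    [AlgHomClass F k (LaurentRing k d) (LaurentRing k d)] (σ : F) {ζ : k} (hζ : ζ ≠ 0)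
    {a : Fin d → ℤ} (hσ : ∀ i, σ (lX i) = ζ ^ a i • lX i) (e : Fin d →₀ ℤ) :
    σ (lMono e) = weightChar ζ hζ a e • lMono e :=
  AddMonoidAlgebra.map_single_of_closure_eq_top Finsupp.addSubgroupClosure_range_single_one σ _
    (by
      rintro _ ⟨i, rfl⟩
      simpa [lX, lMono, Finsupp.linearCombination_single] using hσ i) e

variable (k) in
def invariantGenerators (n : ℤ) (i₀ : Fin d) (a : Fin d → ℤ) : Set (LaurentRing k d) :=
  {lMono (Finsupp.single i₀ n), lMono (Finsupp.single i₀ (-n))} ∪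
    {x | ∃ i : Fin d, i ≠ i₀ ∧
      (x = lMono (Finsupp.single i 1 - Finsupp.single i₀ (a i)) ∨
        x = lMono (Finsupp.single i₀ (a i) - Finsupp.single i 1))}

theorem exists_eq_lMono_of_mem_invariantGenerators {n : ℤ} {i₀ : Fin d} {a : Fin d → ℤ}
    (ha : a i₀ = 1) {x : LaurentRing k d} (hx : x ∈ invariantGenerators k n i₀ a) :
    ∃ e, n ∣ Finsupp.linearCombination ℤ a e ∧ x = lMono e := by
  rcases hx with (rfl | rfl) | ⟨i, -, rfl | rfl⟩ <;>
    exact ⟨_, by simp [Finsupp.linearCombination_single, ha], rfl⟩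

theorem lMono_mem_adjoin_invariantGenerators {n : ℤ} {i₀ : Fin d} {a : Fin d → ℤ}
    (ha : a i₀ = 1) {e : Fin d →₀ ℤ} (he : n ∣ Finsupp.linearCombination ℤ a e) :
    (lMono e : LaurentRing k d) ∈ Algebra.adjoin k (invariantGenerators k n i₀ a) := by
  refine AddMonoidAlgebra.single_one_mem_of_mem_closure ?_
    (Finsupp.mem_addSubgroupClosure_of_dvd_linearCombination a i₀ he)
  rintro _ (rfl | ⟨i, rfl⟩)
  · refine ⟨Algebra.subset_adjoin (Or.inl (Or.inl rfl)), ?_⟩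
    rw [← Finsupp.single_neg]
    exact Algebra.subset_adjoin (Or.inl (Or.inr rfl))
  · by_cases hi : i = i₀
    · simp only [hi, ha, sub_self, neg_zero]
      exact ⟨one_mem _, one_mem _⟩
    · refine ⟨Algebra.subset_adjoin (Or.inr ⟨i, hi, Or.inl rfl⟩), ?_⟩
      rw [neg_sub]
      exact Algebra.subset_adjoin (Or.inr ⟨i, hi, Or.inr rfl⟩)

end Laurent

theorem statement_1_general (p s : ℕ) (hp : p.Prime)
    (k : Type) [Field k]
    (ζ : k) (hζ : IsPrimitiveRoot ζ (p ^ s))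
    (d : ℕ) (hd : 0 < d) (a : Fin d → ℤ) (ha : a ⟨0, hd⟩ = 1)
    (σ : LaurentRing k d ≃ₐ[k] LaurentRing k d)
    (hσ : ∀ i : Fin d, σ (lX i) = ζ ^ (a i) • lX i) :
    fixedSubalgebra k (Subgroup.closure {σ} : Subgroup (LaurentRing k d ≃ₐ[k] LaurentRing k d)).carrier =
      Algebra.adjoin k
        ({lMono (Finsupp.single ⟨0, hd⟩ ((p : ℤ) ^ s)),
          lMono (Finsupp.single ⟨0, hd⟩ (-(p : ℤ) ^ s))} ∪
        {x | ∃ i : Fin d, i ≠ ⟨0, hd⟩ ∧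
          (x = lMono (Finsupp.single i 1 - Finsupp.single ⟨0, hd⟩ (a i)) ∨
           x = lMono (Finsupp.single ⟨0, hd⟩ (a i) - Finsupp.single i 1))}) := by
  change _ = Algebra.adjoin k (invariantGenerators k ((p : ℤ) ^ s) ⟨0, hd⟩ a)
  have hζ₀ : ζ ≠ 0 := hζ.ne_zero (pow_ne_zero s hp.ne_zero)
  have hσχ := map_lMono_of_map_lX σ hζ₀ hσ
  have hχ : ∀ e, weightChar ζ hζ₀ a e = 1 ↔ (p : ℤ) ^ s ∣ Finsupp.linearCombination ℤ a e :=
    fun e => by simpa using hζ.zpow_eq_one_iff_dvd (Finsupp.linearCombination ℤ a e)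
  apply le_antisymm
  · intro x hx
    rw [mem_fixedSubalgebra_closure_singleton_iff,
      AddMonoidAlgebra.map_eq_self_iff_of_map_single σ _ hσχ] at hx
    exact AddMonoidAlgebra.mem_of_coeff_support_subset
      (fun e he => lMono_mem_adjoin_invariantGenerators ha ((hχ e).1 he)) hx
  · refine Algebra.adjoin_le fun x hx => ?_
    obtain ⟨e, he, rfl⟩ := exists_eq_lMono_of_mem_invariantGenerators ha hx
    rw [SetLike.mem_coe, mem_fixedSubalgebra_closure_singleton_iff, hσχ, (hχ e).2 he, one_smul]

/-- the invariants of the Laurent polynomial ring under the diagonal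
automorphism `σ(x_i) = ζ^{a_i} x_i` (where `ζ` is a primitive `p^s`-th root of unity and
`a_1 = 1`) form the `k`-subalgebra generated by `x_1^{p^s}, x_2 x_1^{-a_2}, …,
x_d x_1^{-a_d}` together with their inverses. -/
theorem statement_1 (p s : ℕ) (hp : p.Prime) (hs : 1 ≤ s)
    (k : Type) [Field k] (hchar : ringChar k ≠ p)
    (ζ : k) (hζ : IsPrimitiveRoot ζ (p ^ s))
    (d : ℕ) (hd : 0 < d) (a : Fin d → ℤ) (ha : a ⟨0, hd⟩ = 1)
    (σ : LaurentRing k d ≃ₐ[k] LaurentRing k d)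
    (hσ : ∀ i : Fin d, σ (lX i) = ζ ^ (a i) • lX i) :
    fixedSubalgebra k (Subgroup.closure {σ} : Subgroup (LaurentRing k d ≃ₐ[k] LaurentRing k d)).carrier =
      Algebra.adjoin k
        ({lMono (Finsupp.single ⟨0, hd⟩ ((p : ℤ) ^ s)),
          lMono (Finsupp.single ⟨0, hd⟩ (-(p : ℤ) ^ s))} ∪
        {x | ∃ i : Fin d, i ≠ ⟨0, hd⟩ ∧
          (x = lMono (Finsupp.single i 1 - Finsupp.single ⟨0, hd⟩ (a i)) ∨
           x = lMono (Finsupp.single ⟨0, hd⟩ (a i) - Finsupp.single i 1))}) :=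
  statement_1_general p s hp k ζ hζ d hd a ha σ hσ
end
end

section
/- Let p be a prime and let k be a field of characteristic different from p containing a primitive p-th root of unity ζ. In GL_p(k), let A = ζ·I_p, let B = diag(1, ζ, ζ², …, ζ^{p−1}), and let C be the permutation matrix defined on the standard basis e_1,…,e_p by C·e_i = e_{i−1} (indices taken modulo p). Then the natural action of the subgroup G = ⟨A, B, C⟩ on k^p is irreducible: the only k-subspaces of k^p invariant under A, B and C are 0 and k^p. -/
/-!
Since `ζ` is a primitive `p`-th root of unity, the diagonal entries `ζ ^ i` of `B` are pairwise
distinct, so Lagrange interpolation turns `B` into the coordinate projections: an invariant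
subspace containing `v` contains every `v j • e_j`. If `v ≠ 0`, some `v j • e_j` with `v j ≠ 0`
lies in `W`, and the cyclic shift `C` moves it to every `v j • e_i`; these span `k^p`.
-/

open Polynomial

namespace Matrix

theorem of_ite_eq_mulVec {m n R : Type*} [Fintype n] [DecidableEq n] [NonAssocSemiring R]
    (f : m → n) (v : n → R) :
    of (fun i j => if j = f i then (1 : R) else 0) *ᵥ v = v ∘ f := by
  ext i
  simp [mulVec, dotProduct]

theorem diagonal_mulVec_eq_mul {n R : Type*} [Fintype n] [DecidableEq n]
    [NonUnitalNonAssocSemiring R] (d v : n → R) : diagonal d *ᵥ v = d * v := by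
  ext i
  simp [mulVec_diagonal]

end Matrix

namespace Submodule

theorem single_mem_of_mul_mem {ι k : Type*} [Fintype ι] [DecidableEq ι] [Field k]
    {W : Submodule k (ι → k)} {d : ι → k} (hd : Function.Injective d)
    (hW : ∀ v ∈ W, d * v ∈ W) {v : ι → k} (hv : v ∈ W) (j : ι) :
    Pi.single j (v j) ∈ W := by
  have hproj : aeval d (Lagrange.basis Finset.univ d j) = Pi.single j 1 := by
    ext i
    rw [aeval_pi_apply₂, coe_aeval_eq_eval]
    rcases eq_or_ne i j with rfl | hij
    · simp [Lagrange.eval_basis_self hd.injOn (Finset.mem_univ i)]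
    · simp [Lagrange.eval_basis_of_ne hij.symm (Finset.mem_univ i), hij]
  have := aeval_apply_smul_mem_of_le_comap' hv (Lagrange.basis Finset.univ d j) d hW
  rwa [hproj, smul_eq_mul, ← Pi.single_mul_left, one_mul] at this

open Fin.NatCast in
theorem single_mem_of_comp_add_one_mem {n : ℕ} [NeZero n] {R M : Type*} [Semiring R]
    [AddCommMonoid M] [Module R M] {W : Submodule R (Fin n → M)}
    (hW : ∀ v ∈ W, v ∘ (· + 1) ∈ W) {j : Fin n} {c : M} (hj : Pi.single j c ∈ W) (i : Fin n) :
    Pi.single i c ∈ W := by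
  have hshift : ∀ m : ℕ, Pi.single (j - (m : Fin n)) c ∈ W := by
    intro m
    induction m with
    | zero => simpa using hj
    | succ m ih =>
      convert hW _ ih using 1
      ext l
      simp only [Function.comp_apply, Pi.single_apply, Nat.cast_succ, sub_add_eq_sub_sub,
        eq_sub_iff_add_eq]
  simpa using hshift (j - i).val

theorem eq_top_of_forall_single_mem {ι k : Type*} [Fintype ι] [DecidableEq ι] [DivisionRing k]
    {W : Submodule k (ι → k)} {c : k} (hc : c ≠ 0) (hW : ∀ i, Pi.single i c ∈ W) : W = ⊤ := by
  rw [eq_top_iff, ← (Pi.basisFun k ι).span_eq, span_le]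
  rintro _ ⟨i, rfl⟩
  rw [Pi.basisFun_apply, ← inv_mul_cancel₀ hc, ← smul_eq_mul, Pi.single_smul']
  exact W.smul_mem _ (hW i)

end Submodule

theorem statement_9_general (p : ℕ) (hp : p.Prime)
    (k : Type) [Field k]
    (ζ : k) (hζ : IsPrimitiveRoot ζ p)
    (W : Submodule k (Fin p → k))
    (hBW : ∀ v ∈ W, Matrix.mulVec (Matrix.diagonal (fun i : Fin p => ζ ^ (i : ℕ))) v ∈ W)
    (hCW : ∀ v ∈ W, Matrix.mulVec
      (Matrix.of (fun i j : Fin p => if j = i + ⟨1, hp.one_lt⟩ then (1 : k) else 0)) v ∈ W) :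
    W = ⊥ ∨ W = ⊤ := by
  have : NeZero p := ⟨hp.ne_zero⟩
  refine or_iff_not_imp_left.mpr fun hW => ?_
  obtain ⟨v, hv, hv0⟩ := (Submodule.ne_bot_iff W).mp hW
  obtain ⟨j, hj⟩ := Function.ne_iff.mp hv0
  have hB : ∀ u ∈ W, (fun i : Fin p => ζ ^ (i : ℕ)) * u ∈ W := fun u hu => by
    simpa only [Matrix.diagonal_mulVec_eq_mul] using hBW u hu
  have hone : (⟨1, hp.one_lt⟩ : Fin p) = 1 := Fin.ext (Nat.mod_eq_of_lt hp.one_lt).symm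
  have hC : ∀ u ∈ W, u ∘ (· + 1) ∈ W := fun u hu => by
    simpa only [hone, Matrix.of_ite_eq_mulVec] using hCW u hu
  have hinj : Function.Injective fun i : Fin p => ζ ^ (i : ℕ) :=
    fun i i' h => Fin.ext (hζ.pow_inj i.isLt i'.isLt h)
  have hvj := Submodule.single_mem_of_mul_mem hinj hB hv j
  exact Submodule.eq_top_of_forall_single_mem hj
    (Submodule.single_mem_of_comp_add_one_mem hC hvj)

/-- the natural action on `k^p` of the group generated by `A = ζ·I`,
`B = diag(1, ζ, …, ζ^{p-1})` and the permutation matrix `C` (with `C·e_i = e_{i-1}`) is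
irreducible: the only subspaces of `k^p` invariant under `A`, `B` and `C` are `0` and
`k^p`. -/
theorem statement_9 (p : ℕ) (hp : p.Prime)
    (k : Type) [Field k] (hchar : ringChar k ≠ p)
    (ζ : k) (hζ : IsPrimitiveRoot ζ p)
    (W : Submodule k (Fin p → k))
    (hAW : ∀ v ∈ W, Matrix.mulVec (ζ • (1 : Matrix (Fin p) (Fin p) k)) v ∈ W)
    (hBW : ∀ v ∈ W, Matrix.mulVec (Matrix.diagonal (fun i : Fin p => ζ ^ (i : ℕ))) v ∈ W)
    (hCW : ∀ v ∈ W, Matrix.mulVec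
      (Matrix.of (fun i j : Fin p => if j = i + ⟨1, hp.one_lt⟩ then (1 : k) else 0)) v ∈ W) :
    W = ⊥ ∨ W = ⊤ :=
  statement_9_general p hp k ζ hζ W hBW hCW
end

section
/- Let p be a prime and let k be a field of characteristic different from p containing a primitive p²-th root of unity ω. In GL_p(k), let D = diag(ω^{(1+p)^0}, ω^{(1+p)^1}, …, ω^{(1+p)^{p−1}}), and let C be the permutation matrix defined on the standard basis e_1,…,e_p by C·e_i = e_{i−1} (indices taken modulo p). Then D has order p², C has order p, CDC^{−1} = D^{1+p}, and the subgroup ⟨D, C⟩ of GL_p(k) is a non-abelian group of order p³ which is the internal semidirect product of the cyclic normal subgroup ⟨D⟩ of order p² and the subgroup ⟨C⟩ of order p. -/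
/-!
`C` is the permutation matrix of the shift `i ↦ i + 1` on `Fin p`, so conjugating the diagonal
matrix `D = diag(v)` by `C` shifts its entries. Since `(1 + p)^p ≡ 1 (mod p²)`, the entries
`v i = ω^((1+p)^i)` satisfy `v (i + 1) = v i ^ (1 + p)` also across the wrap-around `p - 1 ↦ 0`,
which gives `C D C⁻¹ = D^(1+p)`. The rest is group theory: `1 + p` is a unit mod `p² = |D|`,
so `C` normalizes `⟨D⟩`; `C` does not commute with `D` and has prime order, so `⟨D⟩ ∩ ⟨C⟩ = 1`;
hence `⟨D, C⟩ = ⟨D⟩⟨C⟩` has order `p² · p`.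
-/

open Matrix Function
open scoped Pointwise

namespace Subgroup

variable {G : Type*} [Group G]

theorem card_sup_of_le_normalizer_of_disjoint {N H : Subgroup G}
    (hLE : H ≤ normalizer (N : Set G)) (hNH : Disjoint N H) :
    Nat.card ↥(N ⊔ H) = Nat.card N * Nat.card H := by
  have hrange :
      Set.range (fun x : N × H => (x.1 : G) * x.2) = ((N ⊔ H : Subgroup G) : Set G) := by
    rw [coe_mul_of_right_le_normalizer_left N H hLE]
    ext g
    simp [Set.mem_mul, eq_comm]
  rw [← SetLike.coe_sort_coe, ← hrange,
    Nat.card_range_of_injective (mul_injective_of_disjoint hNH), Nat.card_prod]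

theorem zpowers_pow_eq_self_of_coprime {g : G} {r : ℕ} (hr : r.Coprime (orderOf g)) :
    zpowers (g ^ r) = zpowers g :=
  le_antisymm (zpowers_le.mpr (pow_mem (mem_zpowers g) r))
    (zpowers_le.mpr (mem_zpowers_pow_iff.mpr hr))

theorem mem_normalizer_zpowers_of_conj_eq_pow {c d : G} {r : ℕ} (hcd : c * d * c⁻¹ = d ^ r)
    (hr : r.Coprime (orderOf d)) : c ∈ normalizer (zpowers d : Set G) := by
  rw [mem_normalizer_iff_map_conj_eq, MonoidHom.map_zpowers, MonoidHom.coe_coe,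
    MulAut.conj_apply, hcd, zpowers_pow_eq_self_of_coprime hr]

theorem disjoint_zpowers_of_not_commute {c d : G} (hc : (orderOf c).Prime)
    (hcd : ¬Commute c d) : Disjoint (zpowers d) (zpowers c) := by
  have : Finite (zpowers c) :=
    Nat.finite_of_card_ne_zero (by rw [Nat.card_zpowers]; exact hc.ne_zero)
  have hdvd := card_dvd_of_le (inf_le_right : zpowers d ⊓ zpowers c ≤ _)
  rw [Nat.card_zpowers] at hdvd
  rw [disjoint_iff]
  rcases (Nat.dvd_prime hc).mp hdvd with h | h
  · exact card_eq_one.mp h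
  · have hle : zpowers d ⊓ zpowers c = zpowers c :=
      eq_of_le_of_card_ge inf_le_right (by rw [h, Nat.card_zpowers])
    have hc_mem : c ∈ zpowers d :=
      (inf_le_left : zpowers d ⊓ zpowers c ≤ _) (by rw [hle]; exact mem_zpowers c)
    obtain ⟨k, rfl⟩ := mem_zpowers_iff.mp hc_mem
    exact absurd ((Commute.refl d).zpow_left k) hcd

theorem not_commute_of_conj_eq_pow_one_add {c d : G} {r : ℕ} (hcd : c * d * c⁻¹ = d ^ (1 + r))
    (hr₀ : r ≠ 0) (hrd : r < orderOf d) : ¬Commute c d := fun h => by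
  rw [h.eq, mul_inv_cancel_right, pow_add, pow_one, left_eq_mul] at hcd
  exact pow_ne_one_of_lt_orderOf hr₀ hrd hcd

theorem closure_pair_eq_zpowers_sup (d c : G) :
    closure ({d, c} : Set G) = zpowers d ⊔ zpowers c := by
  rw [Set.insert_eq, closure_union, zpowers_eq_closure, zpowers_eq_closure]

theorem closure_pair_le_normalizer_zpowers {c d : G} {r : ℕ} (hcd : c * d * c⁻¹ = d ^ r)
    (hr : r.Coprime (orderOf d)) :
    closure ({d, c} : Set G) ≤ normalizer (zpowers d : Set G) := by
  rw [closure_pair_eq_zpowers_sup]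
  exact sup_le le_normalizer (zpowers_le.mpr (mem_normalizer_zpowers_of_conj_eq_pow hcd hr))

theorem coe_closure_pair_eq_mul {c d : G} {r : ℕ} (hcd : c * d * c⁻¹ = d ^ r)
    (hr : r.Coprime (orderOf d)) :
    (closure ({d, c} : Set G) : Set G) = (zpowers d : Set G) * (zpowers c : Set G) := by
  rw [closure_pair_eq_zpowers_sup, coe_mul_of_right_le_normalizer_left]
  exact zpowers_le.mpr (mem_normalizer_zpowers_of_conj_eq_pow hcd hr)

theorem card_closure_pair {c d : G} {r : ℕ} (hcd : c * d * c⁻¹ = d ^ r)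
    (hr : r.Coprime (orderOf d)) (hc : (orderOf c).Prime) (hnc : ¬Commute c d) :
    Nat.card (closure ({d, c} : Set G)) = orderOf d * orderOf c := by
  rw [closure_pair_eq_zpowers_sup, card_sup_of_le_normalizer_of_disjoint
    (zpowers_le.mpr (mem_normalizer_zpowers_of_conj_eq_pow hcd hr))
    (disjoint_zpowers_of_not_commute hc hnc), Nat.card_zpowers, Nat.card_zpowers]

theorem not_forall_mul_comm_closure_pair {c d : G} (hnc : ¬Commute c d) :
    ¬∀ x y : closure ({d, c} : Set G), x * y = y * x := fun h =>
  hnc (Subtype.ext_iff.mp (h ⟨c, subset_closure (by simp)⟩ ⟨d, subset_closure (by simp)⟩))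

end Subgroup

section ShiftMatrix

variable {A R : Type*} [AddGroup A] [DecidableEq A] [Semiring R]

variable (R) in
def shiftMatrix (a : A) : Matrix A A R := of fun i j => if j = i + a then 1 else 0

theorem shiftMatrix_zero : shiftMatrix R (0 : A) = 1 := by
  ext i j
  simp [shiftMatrix, one_apply, eq_comm]

theorem shiftMatrix_injective [Nontrivial R] : Injective (shiftMatrix R : A → _) := by
  intro a b h
  simpa [shiftMatrix] using congr_fun₂ h 0 a

variable [Fintype A]

theorem shiftMatrix_add (a b : A) :
    shiftMatrix R (a + b) = shiftMatrix R a * shiftMatrix R b := by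
  ext i j
  rw [mul_apply, Finset.sum_eq_single (i + a) (fun l _ hl => by simp [shiftMatrix, hl])
    (by simp)]
  simp [shiftMatrix, add_assoc]

variable (A R) in
def shiftMatrixHom : Multiplicative A →* Matrix A A R where
  toFun a := shiftMatrix R a.toAdd
  map_one' := shiftMatrix_zero
  map_mul' a b := shiftMatrix_add a.toAdd b.toAdd

theorem orderOf_shiftMatrix [Nontrivial R] (a : A) :
    orderOf (shiftMatrix R a) = addOrderOf a :=
  orderOf_injective (shiftMatrixHom A R) (shiftMatrix_injective (A := A)) (Multiplicative.ofAdd a)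

theorem shiftMatrix_mul_diagonal (a : A) (v : A → R) :
    shiftMatrix R a * diagonal v = diagonal (fun i => v (i + a)) * shiftMatrix R a := by
  ext i j
  by_cases h : j = i + a <;> simp [shiftMatrix, h]

end ShiftMatrix

open Fin.CommRing in
theorem Fin.addOrderOf_one (n : ℕ) [NeZero n] : addOrderOf (1 : Fin n) = n :=
  CharP.eq (Fin n) (CharP.addOrderOf_one _) inferInstance

theorem Function.IsPeriodicPt.iterate_val_add_one {α : Type*} {f : α → α} {x : α} {n : ℕ}
    [NeZero n] (h : IsPeriodicPt f n x) (i : Fin n) :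
    f^[(i + 1 : Fin n)] x = f (f^[i] x) := by
  rw [Fin.val_add, Fin.val_one', Nat.add_mod_mod, h.iterate_mod_apply, iterate_succ_apply']

theorem shiftMatrix_one_mul_diagonal_pow_pow {R : Type*} [CommSemiring R] {n a : ℕ} [NeZero n]
    {x : R} (hx : x ^ a ^ n = x) :
    shiftMatrix R (1 : Fin n) * diagonal (fun i : Fin n => x ^ a ^ (i : ℕ)) =
      diagonal (fun i : Fin n => x ^ a ^ (i : ℕ)) ^ a * shiftMatrix R 1 := by
  have hper : IsPeriodicPt (· ^ a) n x := by
    rw [IsPeriodicPt, IsFixedPt, pow_iterate]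
    exact hx
  rw [shiftMatrix_mul_diagonal, diagonal_pow]
  congr 2
  funext i
  simpa only [pow_iterate, Pi.pow_apply, ← pow_mul, ← pow_succ] using hper.iterate_val_add_one i

theorem orderOf_diagonal {n R : Type*} [Fintype n] [DecidableEq n] [Semiring R] (v : n → R) :
    orderOf (diagonal v) = orderOf v :=
  orderOf_injective (diagonalRingHom n R).toMonoidHom diagonal_injective v

theorem IsPrimitiveRoot.pi_of_apply {n M : Type*} [CommMonoid M] {v : n → M} {m : ℕ}
    (h : ∀ i, v i ^ m = 1) (i₀ : n) (h₀ : IsPrimitiveRoot (v i₀) m) : IsPrimitiveRoot v m :=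
  ⟨funext h, fun l hl => h₀.dvd_of_pow_eq_one l (congr_fun hl i₀)⟩

theorem sq_dvd_one_add_pow_sub_one (p : ℕ) : p ^ 2 ∣ (1 + p) ^ p - 1 := by
  have := dvd_sub_pow_of_dvd_sub (R := ℤ) (p := p) (a := 1 + p) (b := 1) (by simp) 1
  rw [← Int.natCast_dvd_natCast]
  push_cast [Nat.one_le_pow p (1 + p) (by omega)]
  simpa using this

theorem pow_one_add_pow_eq_self {M : Type*} [Monoid M] {x : M} {p : ℕ} (hx : x ^ p ^ 2 = 1) :
    x ^ (1 + p) ^ p = x := by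
  obtain ⟨t, ht⟩ := sq_dvd_one_add_pow_sub_one p
  rw [← Nat.sub_add_cancel (Nat.one_le_pow p (1 + p) (by omega)), ht, pow_add, pow_mul, hx,
    one_pow, one_mul, pow_one]

theorem orderOf_diagonal_pow_one_add_pow {R : Type*} [CommSemiring R] {p : ℕ} [NeZero p]
    {ω : R} (hω : IsPrimitiveRoot ω (p ^ 2)) :
    orderOf (diagonal fun i : Fin p => ω ^ (1 + p) ^ (i : ℕ)) = p ^ 2 := by
  rw [orderOf_diagonal]
  refine (IsPrimitiveRoot.pi_of_apply (fun i => ?_) 0 (by simpa using hω)).eq_orderOf.symm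
  rw [← pow_mul, mul_comm, pow_mul, hω.pow_eq_one, one_pow]

theorem statement_10_general (p : ℕ) (hp : p.Prime)
    (k : Type) [Field k]
    (ω : k) (hω : IsPrimitiveRoot ω (p ^ 2))
    (D C : (Matrix (Fin p) (Fin p) k)ˣ)
    (hD : (D : Matrix (Fin p) (Fin p) k) =
      Matrix.diagonal (fun i : Fin p => ω ^ ((1 + p) ^ (i : ℕ))))
    (hC : (C : Matrix (Fin p) (Fin p) k) =
      Matrix.of (fun i j : Fin p => if j = i + ⟨1, hp.one_lt⟩ then (1 : k) else 0)) :
    orderOf D = p ^ 2 ∧ orderOf C = p ∧ C * D * C⁻¹ = D ^ (1 + p) ∧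
    (¬ ∀ x y : ↥(Subgroup.closure ({D, C} : Set (Matrix (Fin p) (Fin p) k)ˣ)),
      x * y = y * x) ∧
    Nat.card ↥(Subgroup.closure ({D, C} : Set (Matrix (Fin p) (Fin p) k)ˣ)) = p ^ 3 ∧
    IsCyclic ↥(Subgroup.closure ({D} : Set (Matrix (Fin p) (Fin p) k)ˣ)) ∧
    Nat.card ↥(Subgroup.closure ({D} : Set (Matrix (Fin p) (Fin p) k)ˣ)) = p ^ 2 ∧
    Nat.card ↥(Subgroup.closure ({C} : Set (Matrix (Fin p) (Fin p) k)ˣ)) = p ∧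
    (∀ g ∈ Subgroup.closure ({D, C} : Set (Matrix (Fin p) (Fin p) k)ˣ),
      ∀ n ∈ Subgroup.closure ({D} : Set (Matrix (Fin p) (Fin p) k)ˣ),
        g * n * g⁻¹ ∈ Subgroup.closure ({D} : Set (Matrix (Fin p) (Fin p) k)ˣ)) ∧
    Subgroup.closure ({D} : Set (Matrix (Fin p) (Fin p) k)ˣ) ⊓
      Subgroup.closure ({C} : Set (Matrix (Fin p) (Fin p) k)ˣ) = ⊥ ∧
    (∀ g ∈ Subgroup.closure ({D, C} : Set (Matrix (Fin p) (Fin p) k)ˣ),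
      ∃ n ∈ Subgroup.closure ({D} : Set (Matrix (Fin p) (Fin p) k)ˣ),
      ∃ m ∈ Subgroup.closure ({C} : Set (Matrix (Fin p) (Fin p) k)ˣ), g = n * m) := by
  have : NeZero p := ⟨hp.ne_zero⟩
  have hC' : (C : Matrix (Fin p) (Fin p) k) = shiftMatrix k 1 := by
    rw [hC, show (⟨1, hp.one_lt⟩ : Fin p) = 1 from Fin.ext (Nat.mod_eq_of_lt hp.one_lt).symm]
    rfl
  have hordD : orderOf D = p ^ 2 := by
    rw [← orderOf_units, hD, orderOf_diagonal_pow_one_add_pow hω]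
  have hordC : orderOf C = p := by
    rw [← orderOf_units, hC', orderOf_shiftMatrix, Fin.addOrderOf_one]
  have hconj : C * D * C⁻¹ = D ^ (1 + p) := by
    rw [mul_inv_eq_iff_eq_mul]
    ext : 1
    rw [Units.val_mul, Units.val_mul, Units.val_pow_eq_pow_val, hC', hD]
    exact shiftMatrix_one_mul_diagonal_pow_pow (pow_one_add_pow_eq_self hω.pow_eq_one)
  have hcop : (1 + p).Coprime (orderOf D) := by simp [hordD]
  have hnc : ¬Commute C D := Subgroup.not_commute_of_conj_eq_pow_one_add hconj hp.ne_zero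
    (by rw [hordD]; exact lt_self_pow₀ hp.one_lt one_lt_two)
  have hCprime : (orderOf C).Prime := by rw [hordC]; exact hp
  rw [← Subgroup.zpowers_eq_closure D, ← Subgroup.zpowers_eq_closure C]
  refine ⟨hordD, hordC, hconj, Subgroup.not_forall_mul_comm_closure_pair hnc, ?_, inferInstance,
    by rw [Nat.card_zpowers, hordD], by rw [Nat.card_zpowers, hordC], fun g hg n hn => ?_,
    disjoint_iff.mp (Subgroup.disjoint_zpowers_of_not_commute hCprime hnc), fun g hg => ?_⟩
  · rw [Subgroup.card_closure_pair hconj hcop hCprime hnc, hordD, hordC, ← pow_succ]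
  · exact (Subgroup.mem_normalizer_iff.mp
      (Subgroup.closure_pair_le_normalizer_zpowers hconj hcop hg) n).mp hn
  · rw [← SetLike.mem_coe, Subgroup.coe_closure_pair_eq_mul hconj hcop] at hg
    obtain ⟨n, hn, m, hm, rfl⟩ := hg
    exact ⟨n, hn, m, hm, rfl⟩

/-- in `GL_p(k)` (realized as the units of the matrix ring), for `ω` a
primitive `p²`-th root of unity, `D = diag(ω^{(1+p)^0}, …, ω^{(1+p)^{p-1}})` has order
`p²`, the permutation matrix `C` (with `C·e_i = e_{i-1}`) has order `p`,
`CDC⁻¹ = D^{1+p}`, and `⟨D, C⟩` is a non-abelian group of order `p³` which is the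
internal semidirect product of the cyclic normal subgroup `⟨D⟩` of order `p²` and the
subgroup `⟨C⟩` of order `p`. -/
theorem statement_10 (p : ℕ) (hp : p.Prime)
    (k : Type) [Field k] (hchar : ringChar k ≠ p)
    (ω : k) (hω : IsPrimitiveRoot ω (p ^ 2))
    (D C : (Matrix (Fin p) (Fin p) k)ˣ)
    (hD : (D : Matrix (Fin p) (Fin p) k) =
      Matrix.diagonal (fun i : Fin p => ω ^ ((1 + p) ^ (i : ℕ))))
    (hC : (C : Matrix (Fin p) (Fin p) k) =
      Matrix.of (fun i j : Fin p => if j = i + ⟨1, hp.one_lt⟩ then (1 : k) else 0)) :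
    orderOf D = p ^ 2 ∧ orderOf C = p ∧ C * D * C⁻¹ = D ^ (1 + p) ∧
    (¬ ∀ x y : ↥(Subgroup.closure ({D, C} : Set (Matrix (Fin p) (Fin p) k)ˣ)),
      x * y = y * x) ∧
    Nat.card ↥(Subgroup.closure ({D, C} : Set (Matrix (Fin p) (Fin p) k)ˣ)) = p ^ 3 ∧
    IsCyclic ↥(Subgroup.closure ({D} : Set (Matrix (Fin p) (Fin p) k)ˣ)) ∧
    Nat.card ↥(Subgroup.closure ({D} : Set (Matrix (Fin p) (Fin p) k)ˣ)) = p ^ 2 ∧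
    Nat.card ↥(Subgroup.closure ({C} : Set (Matrix (Fin p) (Fin p) k)ˣ)) = p ∧
    (∀ g ∈ Subgroup.closure ({D, C} : Set (Matrix (Fin p) (Fin p) k)ˣ),
      ∀ n ∈ Subgroup.closure ({D} : Set (Matrix (Fin p) (Fin p) k)ˣ),
        g * n * g⁻¹ ∈ Subgroup.closure ({D} : Set (Matrix (Fin p) (Fin p) k)ˣ)) ∧
    Subgroup.closure ({D} : Set (Matrix (Fin p) (Fin p) k)ˣ) ⊓
      Subgroup.closure ({C} : Set (Matrix (Fin p) (Fin p) k)ˣ) = ⊥ ∧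
    (∀ g ∈ Subgroup.closure ({D, C} : Set (Matrix (Fin p) (Fin p) k)ˣ),
      ∃ n ∈ Subgroup.closure ({D} : Set (Matrix (Fin p) (Fin p) k)ˣ),
      ∃ m ∈ Subgroup.closure ({C} : Set (Matrix (Fin p) (Fin p) k)ˣ), g = n * m) :=
  statement_10_general p hp k ω hω D C hD hC
end

section
/- Let p be a prime and let k be a field of characteristic different from p containing a primitive p²-th root of unity ω. In GL_p(k), let D = diag(ω^{(1+p)^0}, ω^{(1+p)^1}, …, ω^{(1+p)^{p−1}}), and let C be the permutation matrix defined on the standard basis e_1,…,e_p by C·e_i = e_{i−1} (indices taken modulo p). Then the natural action of the subgroup G = ⟨D, C⟩ on k^p is irreducible: the only k-subspaces of k^p invariant under both D and C are 0 and k^p. -/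
/-! Since `(1 + p)^i ≡ 1 + i p (mod p²)`, the diagonal entries of `D` are pairwise distinct, so a
`D`-invariant subspace is spanned by the standard basis vectors it contains. A nonzero one contains
some `e_i`, and `C` permutes the `e_i` transitively. -/

open Matrix Function

section DiagonalInvariant

variable {ι k : Type*} [Fintype ι] [DecidableEq ι]

theorem prod_sub_mul_mem_of_diagonal_mulVec_mem [CommRing k] {c : ι → k}
    {W : Submodule k (ι → k)} (hW : ∀ v ∈ W, diagonal c *ᵥ v ∈ W) {v : ι → k} (hv : v ∈ W)
    (s : Finset ι) : (fun l => (∏ j ∈ s, (c l - c j)) * v l) ∈ W := by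
  induction s using Finset.induction_on with
  | empty => simpa using hv
  | @insert j s hjs ih =>
    convert W.sub_mem (hW _ ih) (W.smul_mem (c j) ih) using 1
    funext l
    simp only [Finset.prod_insert hjs, mulVec_diagonal, Pi.sub_apply, Pi.smul_apply, smul_eq_mul]
    ring

/-- Invariance under a diagonal matrix with distinct entries lets one project onto each
coordinate, via the Lagrange-type product `∏_{j ≠ i} (D - c j)`. -/
theorem single_one_mem_of_diagonal_mulVec_mem [Field k] {c : ι → k} (hc : Injective c)
    {W : Submodule k (ι → k)} (hW : ∀ v ∈ W, diagonal c *ᵥ v ∈ W) {v : ι → k} (hv : v ∈ W)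
    {i : ι} (hvi : v i ≠ 0) : Pi.single i 1 ∈ W := by
  set a := (∏ j ∈ {i}ᶜ, (c i - c j)) * v i
  have ha : a ≠ 0 := mul_ne_zero (Finset.prod_ne_zero_iff.mpr fun j hj =>
    sub_ne_zero.mpr (hc.ne (by rintro rfl; simp at hj))) hvi
  have hproj : (fun l => (∏ j ∈ {i}ᶜ, (c l - c j)) * v l) = a • Pi.single i 1 := by
    funext l
    rcases eq_or_ne l i with rfl | hl
    · simp [a]
    · rw [Finset.prod_eq_zero (Finset.mem_compl.mpr (by simpa using hl)) (sub_self _)]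
      simp [Pi.single_eq_of_ne hl]
  rw [← W.smul_mem_iff ha, ← hproj]
  exact prod_sub_mul_mem_of_diagonal_mulVec_mem hW hv _

end DiagonalInvariant

theorem Submodule.eq_top_of_forall_single_one_mem {ι k : Type*} [Finite ι] [DecidableEq ι]
    [Semiring k] {W : Submodule k (ι → k)} (h : ∀ i, Pi.single i 1 ∈ W) : W = ⊤ := by
  rw [eq_top_iff, ← (Pi.basisFun k ι).span_eq, Submodule.span_le]
  rintro _ ⟨i, rfl⟩
  simpa using h i

theorem Matrix.of_ite_eq_add_mulVec_single {ι k : Type*} [Fintype ι] [DecidableEq ι] [AddGroup ι]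
    [Semiring k] (a j : ι) :
    of (fun i j' : ι => if j' = i + a then (1 : k) else 0) *ᵥ Pi.single j 1 =
      Pi.single (j - a) 1 := by
  ext l
  simp [Pi.single_apply, eq_sub_iff_add_eq, eq_comm]

open Fin.NatCast in
theorem Fin.forall_of_forall_sub_one {n : ℕ} [NeZero n] {P : Fin n → Prop}
    (hP : ∀ j, P j → P (j - 1)) {i : Fin n} (hi : P i) (j : Fin n) : P j := by
  have hiter : ∀ m : ℕ, P (i - m) := by
    intro m
    induction m with
    | zero => simpa using hi
    | succ m ih => simpa [sub_sub] using hP _ ih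
  simpa using hiter (i - j : Fin n)

theorem one_add_pow_modEq (p n : ℕ) : (1 + p) ^ n ≡ 1 + n * p [MOD p ^ 2] := by
  refine (Nat.modEq_iff_dvd.mpr ?_).symm
  push_cast
  rw [show ((1 : ℤ) + p) ^ n - (1 + n * p) = (1 + p) ^ n - 1 ^ (n - 1) * p * n - 1 ^ n by ring]
  exact sq_dvd_add_pow_sub_sub _ _ _

theorem IsPrimitiveRoot.injective_pow_one_add_pow {M : Type*} [CommMonoid M] {ω : M} {p : ℕ}
    (hω : IsPrimitiveRoot ω (p ^ 2)) : Injective fun i : Fin p => ω ^ ((1 + p) ^ (i : ℕ)) := by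
  intro i j hij
  have hp : p ≠ 0 := by rintro rfl; exact Fin.elim0 i
  have hmod : (1 + p) ^ (i : ℕ) ≡ (1 + p) ^ (j : ℕ) [MOD p ^ 2] := by
    rw [hω.eq_orderOf]
    exact (hω.isOfFinOrder (by positivity)).pow_eq_pow_iff_modEq.mp hij
  have hij' : (i : ℕ) * p ≡ j * p [MOD p * p] :=
    Nat.ModEq.add_left_cancel' 1 <| by
      simpa [sq] using ((one_add_pow_modEq p i).symm.trans hmod).trans (one_add_pow_modEq p j)
  exact Fin.ext <| (Nat.ModEq.mul_right_cancel' hp hij').eq_of_lt_of_lt i.isLt j.isLt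

theorem statement_11_general (p : ℕ) (hp : p.Prime)
    (k : Type) [Field k]
    (ω : k) (hω : IsPrimitiveRoot ω (p ^ 2))
    (W : Submodule k (Fin p → k))
    (hDW : ∀ v ∈ W, Matrix.mulVec
      (Matrix.diagonal (fun i : Fin p => ω ^ ((1 + p) ^ (i : ℕ)))) v ∈ W)
    (hCW : ∀ v ∈ W, Matrix.mulVec
      (Matrix.of (fun i j : Fin p => if j = i + ⟨1, hp.one_lt⟩ then (1 : k) else 0)) v ∈ W) :
    W = ⊥ ∨ W = ⊤ := by
  have : NeZero p := ⟨hp.ne_zero⟩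
  refine or_iff_not_imp_left.mpr fun hW => ?_
  obtain ⟨v, hv, hv0⟩ := W.ne_bot_iff.mp hW
  obtain ⟨i, hvi⟩ := Function.ne_iff.mp hv0
  have hi := single_one_mem_of_diagonal_mulVec_mem hω.injective_pow_one_add_pow hDW hv hvi
  refine W.eq_top_of_forall_single_one_mem (Fin.forall_of_forall_sub_one (fun j hj => ?_) hi)
  have hone : (⟨1, hp.one_lt⟩ : Fin p) = 1 := Fin.ext (Nat.mod_eq_of_lt hp.one_lt).symm
  have hCj := hCW _ hj
  rwa [of_ite_eq_add_mulVec_single, hone] at hCj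

/-- the natural action on `k^p` of the group generated by
`D = diag(ω^{(1+p)^0}, …, ω^{(1+p)^{p-1}})` (`ω` a primitive `p²`-th root of unity) and
the permutation matrix `C` (with `C·e_i = e_{i-1}`) is irreducible: the only subspaces
of `k^p` invariant under both `D` and `C` are `0` and `k^p`. -/
theorem statement_11 (p : ℕ) (hp : p.Prime)
    (k : Type) [Field k] (hchar : ringChar k ≠ p)
    (ω : k) (hω : IsPrimitiveRoot ω (p ^ 2))
    (W : Submodule k (Fin p → k))
    (hDW : ∀ v ∈ W, Matrix.mulVec
      (Matrix.diagonal (fun i : Fin p => ω ^ ((1 + p) ^ (i : ℕ)))) v ∈ W)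
    (hCW : ∀ v ∈ W, Matrix.mulVec
      (Matrix.of (fun i j : Fin p => if j = i + ⟨1, hp.one_lt⟩ then (1 : k) else 0)) v ∈ W) :
    W = ⊥ ∨ W = ⊤ :=
  statement_11_general p hp k ω hω W hDW hCW
end

section
/- Let p be an odd prime and let k be a field of characteristic different from p containing a primitive p-th root of unity ζ. Let π and τ be the k-algebra automorphisms of the Laurent polynomial ring k[y_1^{±1},…,y_p^{±1}] determined by: π(y_1) = y_1 and π(y_i) = ζ·y_i for 2 ≤ i ≤ p; τ(y_1) = y_1·y_2^p, τ(y_i) = y_{i+1} for 2 ≤ i ≤ p−1, and τ(y_p) = (y_2⋯y_p)^{−1}. Then the element z_1 = y_1·y_2^{p−1}·y_3^{p−2}⋯y_{p−1}^{2}·y_p is fixed by both π and τ; moreover k[y_1^{±1},…,y_p^{±1}] = k[y_2^{±1},…,y_p^{±1}][z_1^{±1}], and the invariant ring k[y_1^{±1},…,y_p^{±1}]^{⟨π,τ⟩} equals (k[y_2^{±1},…,y_p^{±1}]^{⟨π,τ⟩})[z_1^{±1}]. -/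
open AlgebraicGeometry CategoryTheory TopologicalSpace

noncomputable section

/-!
Both `π` and `τ` send monomials to scalar multiples of monomials without changing the exponent
of `y₁`, so they preserve the `ℤ`-grading of the Laurent ring by the `y₁`-degree; its degree-zero
part is `k[y₂^{±1}, …, y_p^{±1}]`. The monomial `z₁` is a unit of degree one, fixed by `τ` (a check
on exponent vectors) and by `π`, which multiplies it by `ζ^{p(p-1)/2} = 1` since `p` is odd. Hence
every homogeneous element of degree `n` is `z₁ⁿ` times an element of degree zero, and as the
invariant ring is a graded subring the same decomposition holds for invariants.
-/

theorem Finsupp.mem_addSubmonoid_of_support_subset {ι : Type*} {M : AddSubmonoid (ι →₀ ℤ)}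
    {s : Set ι} (h : ∀ j ∈ s, Finsupp.single j 1 ∈ M ∧ Finsupp.single j (-1) ∈ M)
    {e : ι →₀ ℤ} (he : ↑e.support ⊆ s) : e ∈ M := by
  have hsingle : ∀ j ∈ s, ∀ n : ℤ, Finsupp.single j n ∈ M := by
    intro j hj n
    induction n using Int.induction_on with
    | zero => simp [zero_mem]
    | succ n ih => rw [Finsupp.single_add]; exact add_mem ih (h j hj).1
    | pred n ih => rw [sub_eq_add_neg, Finsupp.single_add]; exact add_mem ih (h j hj).2
  rw [← e.sum_single]
  exact sum_mem fun j hj => hsingle j (he hj) _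

theorem DirectSum.decompose_map_of_mapsTo {ι R A F : Type*} [DecidableEq ι] [AddCommMonoid A]
    [SetLike R A] [AddSubmonoidClass R A] (𝒜 : ι → R) [DirectSum.Decomposition 𝒜]
    [FunLike F A A] [AddMonoidHomClass F A A] (σ : F) (hσ : ∀ i, ∀ a ∈ 𝒜 i, σ a ∈ 𝒜 i)
    (a : A) (i : ι) : (DirectSum.decompose 𝒜 (σ a) i : A) = σ (DirectSum.decompose 𝒜 a i) := by
  induction a using DirectSum.Decomposition.inductionOn 𝒜 with
  | zero => simp
  | @homogeneous j a =>
    by_cases hij : j = i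
    · subst hij
      rw [DirectSum.decompose_of_mem_same 𝒜 (hσ j a a.2), DirectSum.decompose_of_mem_same 𝒜 a.2]
    · rw [DirectSum.decompose_of_mem_ne 𝒜 (hσ j a a.2) hij,
        DirectSum.decompose_of_mem_ne 𝒜 a.2 hij, map_zero]
  | add a b ha hb => simp only [map_add, DirectSum.decompose_add, DirectSum.add_apply,
      AddMemClass.coe_add, ha, hb]

theorem Units.val_zpow_mem {M S : Type*} [Monoid M] [SetLike S M] [SubmonoidClass S M] {s : S}
    {u : Mˣ} (hu : (u : M) ∈ s) (hu' : (↑u⁻¹ : M) ∈ s) (n : ℤ) : (↑(u ^ n) : M) ∈ s := by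
  obtain ⟨m, rfl | rfl⟩ := n.eq_nat_or_neg
  · rw [zpow_natCast, Units.val_pow_eq_pow_val]
    exact pow_mem hu m
  · rw [zpow_neg, zpow_natCast, ← inv_pow, Units.val_pow_eq_pow_val]
    exact pow_mem hu' m

section Graded

variable {R A : Type*} [CommSemiring R] [Semiring A] [Algebra R A] (𝒜 : ℤ → Submodule R A)
  [GradedAlgebra 𝒜] {u : Aˣ}

theorem Units.val_zpow_mem_graded (hu : (u : A) ∈ 𝒜 1) (hu' : (↑u⁻¹ : A) ∈ 𝒜 (-1)) (n : ℤ) :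
    (↑(u ^ n) : A) ∈ 𝒜 n := by
  induction n using Int.induction_on with
  | zero => simpa using SetLike.GradedOne.one_mem
  | succ n ih => rw [zpow_add_one, Units.val_mul]; exact SetLike.GradedMul.mul_mem ih hu
  | pred n ih =>
    rw [zpow_sub_one, Units.val_mul, sub_eq_add_neg]; exact SetLike.GradedMul.mul_mem ih hu'

theorem Subalgebra.eq_adjoin_grade_zero_of_isHomogeneous (hu : (u : A) ∈ 𝒜 1)
    (hu' : (↑u⁻¹ : A) ∈ 𝒜 (-1)) {F : Subalgebra R A}
    (hF : DirectSum.SetLike.IsHomogeneous 𝒜 F) (huF : (u : A) ∈ F) (hu'F : (↑u⁻¹ : A) ∈ F) :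
    F = Algebra.adjoin R (((𝒜 0 : Set A) ∩ F) ∪ {↑u, ↑u⁻¹}) := by
  classical
  refine le_antisymm (fun a ha => ?_) (Algebra.adjoin_le ?_)
  · rw [← DirectSum.sum_support_decompose 𝒜 a]
    refine sum_mem fun i _ => ?_
    set b := (DirectSum.decompose 𝒜 a i : A)
    have hb0 : (↑(u ^ (-i)) * b : A) ∈ 𝒜 0 := by
      simpa using SetLike.GradedMul.mul_mem (Units.val_zpow_mem_graded 𝒜 hu hu' (-i))
        (DirectSum.decompose 𝒜 a i).2
    have hbF : (↑(u ^ (-i)) * b : A) ∈ F := mul_mem (Units.val_zpow_mem huF hu'F _) (hF i ha)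
    have hb : b = ↑(u ^ i) * (↑(u ^ (-i)) * b) := by
      rw [← mul_assoc, ← Units.val_mul, ← zpow_add, add_neg_cancel, zpow_zero, Units.val_one,
        one_mul]
    rw [hb]
    exact mul_mem
      (Units.val_zpow_mem (Algebra.subset_adjoin (by simp)) (Algebra.subset_adjoin (by simp)) i)
      (Algebra.subset_adjoin (Or.inl ⟨hb0, hbF⟩))
  · exact Set.union_subset Set.inter_subset_right
      (Set.insert_subset huF (Set.singleton_subset_iff.mpr hu'F))

end Graded

theorem fixedSubalgebra_closure {k A : Type} [CommSemiring k] [CommSemiring A] [Algebra k A]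
    (S : Set (A ≃ₐ[k] A)) :
    fixedSubalgebra k (Subgroup.closure S).carrier = fixedSubalgebra k S := by
  ext x
  refine ⟨fun h σ hσ => h σ (Subgroup.subset_closure hσ), fun h σ hσ => ?_⟩
  exact (Subgroup.closure_le (MulAction.stabilizer (A ≃ₐ[k] A) x)).2 h hσ

theorem fixedSubalgebra_isHomogeneous {k A : Type} [CommSemiring k] [CommSemiring A]
    [Algebra k A] (𝒜 : ℤ → Submodule k A) [GradedAlgebra 𝒜] {S : Set (A ≃ₐ[k] A)}
    (hS : ∀ σ ∈ S, ∀ i, ∀ a ∈ 𝒜 i, σ a ∈ 𝒜 i) :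
    DirectSum.SetLike.IsHomogeneous 𝒜 (fixedSubalgebra k S) :=
  fun i a ha σ hσ => by
    show σ _ = _
    rw [← DirectSum.decompose_map_of_mapsTo 𝒜 σ (hS σ hσ), ha σ hσ]

namespace LaurentRing

variable {k : Type} [CommRing k] {d : ℕ}

theorem lMono_zero : (lMono 0 : LaurentRing k d) = 1 := rfl

theorem lMono_add (a b : Fin d →₀ ℤ) :
    (lMono (a + b) : LaurentRing k d) = lMono a * lMono b := by
  simp [lMono, AddMonoidAlgebra.single_mul_single]

theorem lX_pow (i : Fin d) (n : ℕ) :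
    (lX i : LaurentRing k d) ^ n = lMono (Finsupp.single i (n : ℤ)) := by
  simp [lX, lMono, AddMonoidAlgebra.single_pow]

theorem lMono_mem_of_support_subset {S : Subalgebra k (LaurentRing k d)} {s : Set (Fin d)}
    (h : ∀ j ∈ s, lX j ∈ S ∧ lMono (Finsupp.single j (-1)) ∈ S) {e : Fin d →₀ ℤ}
    (he : ↑e.support ⊆ s) : lMono e ∈ S :=
  Finsupp.mem_addSubmonoid_of_support_subset (M :=
    { carrier := {e | lMono e ∈ S}
      add_mem' := fun ha hb => by
        show lMono _ ∈ S
        rw [lMono_add]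
        exact mul_mem ha hb
      zero_mem' := one_mem S }) h he

theorem algHom_ext {B : Type} [Semiring B] [Algebra k B] {f g : LaurentRing k d →ₐ[k] B}
    (h : ∀ j, f (lX j) = g (lX j)) : f = g := by
  have inv_mul (j) : lMono (Finsupp.single j (-1)) * lX j = (1 : LaurentRing k d) := by
    rw [lX, ← lMono_add, ← Finsupp.single_add, neg_add_cancel, Finsupp.single_zero, lMono_zero]
  refine AddMonoidAlgebra.algHom_ext (fun e => lMono_mem_of_support_subset
    (S := AlgHom.equalizer f g) (s := Set.univ) (fun j _ => ⟨h j, ?_⟩) (Set.subset_univ _))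
    (Subsingleton.elim _ _)
  show f _ = g _
  refine left_inv_eq_right_inv (a := f (lX j)) ?_ ?_
  · rw [← map_mul, inv_mul, map_one]
  · rw [h j, ← map_mul, mul_comm, inv_mul, map_one]

theorem algHom_lMono_eq (φ : LaurentRing k d →ₐ[k] LaurentRing k d)
    (χ : Multiplicative (Fin d →₀ ℤ) →* k) (T : (Fin d →₀ ℤ) →+ (Fin d →₀ ℤ))
    (h : ∀ j, φ (lX j) = χ (.ofAdd (Finsupp.single j 1)) • lMono (T (Finsupp.single j 1)))
    (e : Fin d →₀ ℤ) : φ (lMono e) = χ (.ofAdd e) • lMono (T e) := by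
  let ψ : Multiplicative (Fin d →₀ ℤ) →* LaurentRing k d :=
    { toFun := fun e => χ e • lMono (T e.toAdd)
      map_one' := by simp [lMono_zero]
      map_mul' := fun a b => by
        simp only [map_mul, toAdd_mul, map_add, lMono_add, smul_mul_smul_comm] }
  have hφ : φ = AddMonoidAlgebra.lift k _ (Fin d →₀ ℤ) ψ :=
    algHom_ext fun j => by rw [h j]; simp [lX, lMono, ψ]
  simp [hφ, lMono, ψ]

abbrev grade (k : Type) [CommRing k] (i₀ : Fin d) : ℤ → Submodule k (LaurentRing k d) :=
  AddMonoidAlgebra.gradeBy k (Finsupp.applyAddHom i₀)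

theorem lMono_mem_grade (i₀ : Fin d) (e : Fin d →₀ ℤ) : lMono e ∈ grade k i₀ (e i₀) :=
  AddMonoidAlgebra.single_mem_gradeBy _ _ _

theorem grade_eq_span (i₀ : Fin d) (n : ℤ) :
    grade k i₀ n = Submodule.span k (lMono '' {e | e i₀ = n}) :=
  AddMonoidAlgebra.supported_eq_span_single k _

theorem map_mem_grade {F : Type*} [FunLike F (LaurentRing k d) (LaurentRing k d)]
    [LinearMapClass F k (LaurentRing k d) (LaurentRing k d)] (σ : F) {i₀ : Fin d}
    (hσ : ∀ e, σ (lMono e) ∈ grade k i₀ (e i₀)) {n : ℤ} {a : LaurentRing k d}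
    (ha : a ∈ grade k i₀ n) : σ a ∈ grade k i₀ n := by
  rw [grade_eq_span] at ha
  induction ha using Submodule.span_induction with
  | mem x hx => obtain ⟨e, rfl, rfl⟩ := hx; exact hσ e
  | zero => simp
  | add x y _ _ hx hy => simpa using add_mem hx hy
  | smul c x _ hx => simpa using Submodule.smul_mem _ c hx

def gensExcept (k : Type) [CommRing k] (i₀ : Fin d) : Set (LaurentRing k d) :=
  {x | ∃ j : Fin d, j ≠ i₀ ∧ (x = lX j ∨ x = lMono (Finsupp.single j (-1)))}

theorem grade_zero_subset_adjoin (i₀ : Fin d) :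
    (grade k i₀ 0 : Set (LaurentRing k d)) ⊆ Algebra.adjoin k (gensExcept k i₀) := by
  intro x hx
  rw [grade_eq_span] at hx
  refine (Submodule.span_le (p := Subalgebra.toSubmodule (Algebra.adjoin k _))).2 ?_ hx
  rintro _ ⟨e, he, rfl⟩
  refine lMono_mem_of_support_subset (s := {j | j ≠ i₀})
    (fun j hj => ⟨Algebra.subset_adjoin (by exact ⟨j, hj, .inl rfl⟩),
      Algebra.subset_adjoin (by exact ⟨j, hj, .inr rfl⟩)⟩)
    fun j hj => ?_
  rintro rfl
  exact Finsupp.mem_support_iff.mp hj he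

def lMonoUnit (e : Fin d →₀ ℤ) : (LaurentRing k d)ˣ where
  val := lMono e
  inv := lMono (-e)
  val_inv := by rw [← lMono_add, add_neg_cancel, lMono_zero]
  inv_val := by rw [← lMono_add, neg_add_cancel, lMono_zero]

theorem lMonoUnit_mem_grade {i₀ : Fin d} {e : Fin d →₀ ℤ} (he : e i₀ = 1) :
    (lMonoUnit (k := k) e : LaurentRing k d) ∈ grade k i₀ 1 ∧
      (↑(lMonoUnit (k := k) e)⁻¹ : LaurentRing k d) ∈ grade k i₀ (-1) :=
  ⟨he ▸ lMono_mem_grade i₀ e, show lMono (-e) ∈ _ by simpa [he] using lMono_mem_grade i₀ (-e)⟩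

theorem adjoin_gensExcept_union_eq_top {i₀ : Fin d} {e : Fin d →₀ ℤ} (he : e i₀ = 1) :
    Algebra.adjoin k (gensExcept k i₀ ∪ {lMono e, lMono (-e)}) = ⊤ := by
  obtain ⟨hu, hu'⟩ := lMonoUnit_mem_grade (k := k) he
  rw [eq_top_iff, Subalgebra.eq_adjoin_grade_zero_of_isHomogeneous (grade k i₀) hu hu'
    (F := ⊤) (fun _ _ _ => trivial) trivial trivial]
  refine Algebra.adjoin_le
    (Set.union_subset ?_ (Set.subset_union_right.trans Algebra.subset_adjoin))
  exact Set.inter_subset_left.trans ((grade_zero_subset_adjoin i₀).trans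
    (Algebra.adjoin_mono Set.subset_union_left))

theorem fixedSubalgebra_eq_adjoin {i₀ : Fin d} {e : Fin d →₀ ℤ} (he : e i₀ = 1)
    {S : Set (LaurentRing k d ≃ₐ[k] LaurentRing k d)}
    (hS : ∀ σ ∈ S, ∀ f, σ (lMono f) ∈ grade k i₀ (f i₀))
    (hfix : ∀ σ ∈ S, σ (lMono e) = lMono e) :
    fixedSubalgebra k S = Algebra.adjoin k
      (((Algebra.adjoin k (gensExcept k i₀) : Set (LaurentRing k d)) ∩ fixedSubalgebra k S) ∪
        {lMono e, lMono (-e)}) := by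
  obtain ⟨hu, hu'⟩ := lMonoUnit_mem_grade (k := k) he
  have hinv : ∀ σ ∈ S, σ (lMono (-e)) = lMono (-e) := fun σ hσ =>
    left_inv_eq_right_inv (a := lMono e)
      (by rw [← hfix σ hσ, ← map_mul, ← lMono_add, neg_add_cancel, lMono_zero, map_one])
      (by rw [← lMono_add, add_neg_cancel, lMono_zero])
  have hF := Subalgebra.eq_adjoin_grade_zero_of_isHomogeneous (grade k i₀) hu hu'
    (fixedSubalgebra_isHomogeneous _ fun σ hσ _ _ => map_mem_grade σ (hS σ hσ)) hfix hinv
  refine le_antisymm (hF.le.trans (Algebra.adjoin_mono (Set.union_subset_union_left _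
    (Set.inter_subset_inter_left _ (grade_zero_subset_adjoin i₀))))) (Algebra.adjoin_le ?_)
  exact Set.union_subset Set.inter_subset_right
    (Set.insert_subset hfix (Set.singleton_subset_iff.mpr hinv))

end LaurentRing

open LaurentRing

def zExp (p : ℕ) : Fin p →₀ ℤ :=
  Finsupp.equivFunOnFinite.symm fun j => if (j : ℕ) = 0 then 1 else p - j

def tailDegree (p : ℕ) : (Fin p →₀ ℤ) →+ ℤ where
  toFun e := ∑ j : Fin p, if (j : ℕ) = 0 then 0 else e j
  map_zero' := by simp
  map_add' a b := by
    rw [← Finset.sum_add_distrib]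
    refine Finset.sum_congr rfl fun j _ => ?_
    split_ifs <;> simp

def tauExp (p : ℕ) : (Fin p →₀ ℤ) →+ (Fin p →₀ ℤ) where
  toFun e := Finsupp.equivFunOnFinite.symm fun i =>
    if (i : ℕ) = 0 then e i
    else
      (if (i : ℕ) = 1 then p * e ⟨0, i.pos⟩ else e ⟨i - 1, (Nat.sub_le _ _).trans_lt i.isLt⟩) -
        e ⟨p - 1, Nat.sub_lt i.pos one_pos⟩
  map_zero' := by ext; simp
  map_add' a b := by
    ext i
    simp only [Finsupp.coe_add, Pi.add_apply, Finsupp.coe_equivFunOnFinite_symm]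
    split_ifs <;> ring

theorem tauExp_apply_zero {p : ℕ} (hp : 0 < p) (e : Fin p →₀ ℤ) :
    tauExp p e ⟨0, hp⟩ = e ⟨0, hp⟩ := by
  simp [tauExp]

theorem tauExp_zExp {p : ℕ} (hp : 1 < p) : tauExp p (zExp p) = zExp p := by
  ext ⟨i, hi⟩
  simp only [tauExp, zExp, AddMonoidHom.coe_mk, ZeroHom.coe_mk,
    Finsupp.coe_equivFunOnFinite_symm]
  split_ifs <;> push_cast <;> omega

theorem two_mul_tailDegree_zExp (p : ℕ) : 2 * tailDegree p (zExp p) = p * (p - 1) := by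
  rcases Nat.eq_zero_or_pos p with rfl | hp
  · simp [tailDegree]
  have hsum :
      tailDegree p (zExp p) = ∑ n ∈ Finset.range p, if n = 0 then 0 else (p - n : ℤ) := by
    rw [← Fin.sum_univ_eq_sum_range (fun n : ℕ => if n = 0 then (0 : ℤ) else p - n) p]
    simp only [tailDegree, zExp, AddMonoidHom.coe_mk, ZeroHom.coe_mk,
      Finsupp.coe_equivFunOnFinite_symm]
    refine Finset.sum_congr rfl fun j _ => ?_
    split_ifs <;> rfl
  have hgauss : (∑ n ∈ Finset.range p, (n : ℤ)) * 2 = p * (p - 1) := by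
    have := congrArg (Nat.cast : ℕ → ℤ) (Finset.sum_range_id_mul_two p)
    push_cast [Nat.cast_sub hp] at this
    exact this
  have hpair : ∀ n ∈ Finset.range p, (if n = 0 then 0 else (p - n : ℤ)) =
      p - n - if n = 0 then (p : ℤ) else 0 := fun n _ => by split_ifs with h <;> simp [h]
  rw [hsum, Finset.sum_congr rfl hpair, Finset.sum_sub_distrib, Finset.sum_sub_distrib,
    Finset.sum_ite_eq' (Finset.range p) 0 (fun _ => (p : ℤ))]
  simp only [Finset.mem_range, hp, if_true, Finset.sum_const, Finset.card_range, nsmul_eq_mul]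
  linarith

theorem zpow_tailDegree_zExp {k : Type} [Field k] {p : ℕ} (hp : Odd p) {ζ : k}
    (hζ : ζ ^ p = 1) : ζ ^ tailDegree p (zExp p) = 1 := by
  obtain ⟨m, rfl⟩ := hp
  have h : tailDegree (2 * m + 1) (zExp (2 * m + 1)) = ((2 * m + 1 : ℕ) : ℤ) * m := by
    have := two_mul_tailDegree_zExp (2 * m + 1)
    push_cast at this ⊢
    linarith
  rw [h, zpow_mul, zpow_natCast, zpow_natCast, hζ, one_pow]

theorem pi_lMono {k : Type} [Field k] {p : ℕ} (hp : 0 < p) {ζ : k} (hζ : ζ ≠ 0)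
    (π : LaurentRing k p ≃ₐ[k] LaurentRing k p) (hπ0 : π (lX ⟨0, hp⟩) = lX ⟨0, hp⟩)
    (hπ : ∀ j : Fin p, j ≠ ⟨0, hp⟩ → π (lX j) = ζ • lX j) (e : Fin p →₀ ℤ) :
    π (lMono e) = ζ ^ tailDegree p e • lMono e := by
  let χ : Multiplicative (Fin p →₀ ℤ) →* k :=
    { toFun := fun e => ζ ^ tailDegree p e.toAdd
      map_one' := by simp
      map_mul' := fun a b => by simp [zpow_add₀ hζ] }
  refine algHom_lMono_eq π.toAlgHom χ (AddMonoidHom.id _) (fun j => ?_) e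
  have hdeg : tailDegree p (Finsupp.single j 1) = if (j : ℕ) = 0 then 0 else 1 := by
    simp only [tailDegree, AddMonoidHom.coe_mk, ZeroHom.coe_mk]
    rw [Finset.sum_eq_single j (fun b _ hb => by simp [Ne.symm hb]) (by simp)]
    simp
  by_cases hj : j = ⟨0, hp⟩
  · subst hj
    simpa [χ, hdeg, lX] using hπ0
  · simpa [χ, hdeg, lX, Fin.ext_iff.not.mp hj] using hπ j hj

theorem tau_lMono {k : Type} [CommRing k] {p : ℕ} (hp : 1 < p)
    (τ : LaurentRing k p ≃ₐ[k] LaurentRing k p)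
    (hτ0 : τ (lX ⟨0, Nat.zero_lt_of_lt hp⟩) = lX ⟨0, Nat.zero_lt_of_lt hp⟩ * lX ⟨1, hp⟩ ^ p)
    (hτ : ∀ (j : ℕ), 1 ≤ j → ∀ (h2 : j + 1 < p),
      τ (lX ⟨j, Nat.lt_of_succ_lt h2⟩) = lX ⟨j + 1, h2⟩)
    (hτlast : τ (lX ⟨p - 1, Nat.sub_one_lt_of_lt hp⟩) =
      lMono (Finsupp.equivFunOnFinite.symm
        (fun j : Fin p => if j = ⟨0, Nat.zero_lt_of_lt hp⟩ then 0 else (-1 : ℤ))))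
    (e : Fin p →₀ ℤ) : τ (lMono e) = lMono (tauExp p e) := by
  refine (algHom_lMono_eq τ.toAlgHom 1 (tauExp p) (fun j => ?_) e).trans (one_smul _ _)
  obtain ⟨j, hj⟩ := j
  rw [MonoidHom.one_apply, one_smul]
  show τ _ = _
  rcases (show j = 0 ∨ j = p - 1 ∨ 1 ≤ j ∧ j + 1 < p by omega) with rfl | rfl | ⟨hj1, hjp⟩
  on_goal 1 => rw [hτ0, lX_pow, lX, ← lMono_add]
  on_goal 2 => rw [hτlast]
  on_goal 3 => rw [hτ j hj1 hjp, lX]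
  all_goals
    congr 1
    ext ⟨i, hi⟩
    simp [tauExp, Finsupp.single_apply]
    split_ifs <;> omega

-- The index `j : Fin p` stands for the variable `y_{j+1}`.
/-- for the automorphisms `π, τ` of `k[y_1^{±1}, …, y_p^{±1}]` given by
`π(y_1) = y_1`, `π(y_i) = ζ y_i` (`i ≥ 2`), `τ(y_1) = y_1 y_2^p`, `τ(y_i) = y_{i+1}`
(`2 ≤ i ≤ p-1`), `τ(y_p) = (y_2 ⋯ y_p)⁻¹`, the element
`z_1 = y_1 y_2^{p-1} y_3^{p-2} ⋯ y_p` is fixed by `π` and `τ`; moreover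
`k[y^{±1}] = k[y_2^{±1}, …, y_p^{±1}][z_1^{±1}]` and the invariant ring of `⟨π, τ⟩`
equals the subalgebra generated by the `⟨π, τ⟩`-invariants of `k[y_2^{±1}, …, y_p^{±1}]`
together with `z_1^{±1}`.  (Variables are indexed by `Fin p`, index `j` ↔ `y_{j+1}`.) -/
theorem statement_12 (p : ℕ) (hp : p.Prime) (hodd : Odd p)
    (k : Type) [Field k]
    (ζ : k) (hζ : IsPrimitiveRoot ζ p)
    (π τ : LaurentRing k p ≃ₐ[k] LaurentRing k p)
    (hπ0 : π (lX ⟨0, hp.pos⟩) = lX ⟨0, hp.pos⟩)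
    (hπ : ∀ j : Fin p, j ≠ ⟨0, hp.pos⟩ → π (lX j) = ζ • lX j)
    (hτ0 : τ (lX ⟨0, hp.pos⟩) = lX ⟨0, hp.pos⟩ * lX ⟨1, hp.one_lt⟩ ^ p)
    (hτ : ∀ (j : ℕ) (h1 : 1 ≤ j) (h2 : j + 1 < p), τ (lX ⟨j, by omega⟩) = lX ⟨j + 1, h2⟩)
    (hτlast : τ (lX ⟨p - 1, by have := hp.pos; omega⟩) =
      lMono (Finsupp.equivFunOnFinite.symm
        (fun j : Fin p => if j = ⟨0, hp.pos⟩ then 0 else (-1 : ℤ))))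
    (z₁ : LaurentRing k p)
    (hz₁ : z₁ = lMono (Finsupp.equivFunOnFinite.symm
      (fun j : Fin p => if j = ⟨0, hp.pos⟩ then 1 else (p : ℤ) - (j : ℕ))))
    (z₁' : LaurentRing k p)
    (hz₁' : z₁' = lMono (-(Finsupp.equivFunOnFinite.symm
      (fun j : Fin p => if j = ⟨0, hp.pos⟩ then 1 else (p : ℤ) - (j : ℕ))))) :
    π z₁ = z₁ ∧ τ z₁ = z₁ ∧
    Algebra.adjoin k
      ({x | ∃ j : Fin p, j ≠ ⟨0, hp.pos⟩ ∧
        (x = lX j ∨ x = lMono (Finsupp.single j (-1)))} ∪ {z₁, z₁'}) = ⊤ ∧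
    fixedSubalgebra k
        (Subgroup.closure {π, τ} : Subgroup (LaurentRing k p ≃ₐ[k] LaurentRing k p)).carrier =
      Algebra.adjoin k
        (((Algebra.adjoin k {x | ∃ j : Fin p, j ≠ ⟨0, hp.pos⟩ ∧
            (x = lX j ∨ x = lMono (Finsupp.single j (-1)))}).carrier ∩
          (fixedSubalgebra k (Subgroup.closure {π, τ} :
            Subgroup (LaurentRing k p ≃ₐ[k] LaurentRing k p)).carrier).carrier) ∪ {z₁, z₁'}) := by
  have hz : z₁ = lMono (zExp p) :=
    hz₁.trans (congrArg lMono (by ext j; simp [zExp, Fin.ext_iff]))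
  have hz' : z₁' = lMono (-zExp p) :=
    hz₁'.trans (congrArg lMono (by ext j; simp [zExp, Fin.ext_iff]))
  have hπe := pi_lMono hp.pos (hζ.ne_zero hp.ne_zero) π hπ0 hπ
  have hτe := tau_lMono hp.one_lt τ hτ0 hτ hτlast
  have hgrade :
      ∀ σ ∈ ({π, τ} : Set _), ∀ e, σ (lMono e) ∈ grade k ⟨0, hp.pos⟩ (e ⟨0, hp.pos⟩) := by
    rintro σ (rfl | rfl) e
    · rw [hπe]
      exact Submodule.smul_mem _ _ (lMono_mem_grade _ e)
    · rw [hτe, ← tauExp_apply_zero hp.pos]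
      exact lMono_mem_grade _ _
  have hfix : ∀ σ ∈ ({π, τ} : Set _), σ (lMono (zExp p)) = lMono (zExp p) := by
    rintro σ (rfl | rfl)
    · rw [hπe, zpow_tailDegree_zExp hodd hζ.pow_eq_one, one_smul]
    · rw [hτe, tauExp_zExp hp.one_lt]
  have hz0 : zExp p ⟨0, hp.pos⟩ = 1 := by simp [zExp]
  subst hz hz'
  refine ⟨hfix π (by simp), hfix τ (by simp), adjoin_gensExcept_union_eq_top hz0, ?_⟩
  rw [fixedSubalgebra_closure]
  exact fixedSubalgebra_eq_adjoin hz0 hgrade hfix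
end
end

section
/- Let p be a prime and let k be a field of characteristic different from p containing a primitive p²-th root of unity. Then every non-abelian group G of order p³ has a faithful irreducible k-linear representation of dimension p. -/
/-!
The center `Z` of `G` has order `p` and `G ⧸ Z` has order `p²`, hence is abelian, so all
commutators are central. The centralizer `A` of a non-central element `a` is then abelian of
index `p` and normal, and since `k` has enough `p²`-th roots of unity there is a character `χ`
of `A` that is injective on `Z`. The induced representation `Ind_A^G χ` has dimension `p`.

It is faithful: `Z` acts by the scalars `χ z`, so the kernel meets `Z` trivially; as the kernel
is normal it contains the commutators of its elements with `G`, which are central, so the kernel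
is itself central, hence trivial.

It is irreducible (Mackey): for `h ∉ A` the conjugate character `χ^h` differs from `χ` at `a`,
because `χ (h a h⁻¹ a⁻¹) ≠ 1`. So `A` acts diagonally on the standard basis with pairwise
distinct characters, every nonzero invariant subspace contains a basis vector, and `G` permutes
the basis vectors transitively up to scalars.
-/

open Subgroup Function

section OrderPrimeCube

variable {p : ℕ} [hp : Fact p.Prime] {G : Type*} [Group G] [Finite G]

theorem card_center_eq_prime_of_card_eq_prime_pow_three (hG : Nat.card G = p ^ 3)
    (hnc : ¬ IsMulCommutative G) : Nat.card (center G) = p := by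
  obtain ⟨m, hm0, hm⟩ := IsPGroup.card_center_eq_prime_pow hG (by norm_num)
  have hquot := card_eq_card_quotient_mul_card_subgroup (center G)
  rw [hG, hm] at hquot
  have hm3 : m ≤ 3 :=
    (Nat.pow_dvd_pow_iff_le_right hp.out.one_lt).mp (Dvd.intro_left _ hquot.symm)
  interval_cases m
  · rw [hm, pow_one]
  · have : Nat.card (G ⧸ center G) = p := by
      rw [pow_succ p 2, mul_comm] at hquot
      exact (Nat.eq_of_mul_eq_mul_right (pow_pos hp.out.pos 2) hquot).symm
    have := isCyclic_of_prime_card this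
    exact absurd (isMulCommutative_of_isCyclic_quotient_center_self G) hnc
  · exact absurd (center_eq_top_iff.mp (eq_top_of_card_eq _ (hm.trans hG.symm))) hnc

theorem commutator_mem_center_of_card_eq_prime_pow_three (hG : Nat.card G = p ^ 3)
    (hnc : ¬ IsMulCommutative G) (g h : G) : g * h * g⁻¹ * h⁻¹ ∈ center G := by
  have hquot := card_eq_card_quotient_mul_card_subgroup (center G)
  rw [hG, card_center_eq_prime_of_card_eq_prime_pow_three hG hnc, pow_succ] at hquot
  have := IsPGroup.isMulCommutative_of_card_eq_prime_sq
    (Nat.eq_of_mul_eq_mul_right hp.out.pos hquot).symm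
  rw [← QuotientGroup.eq_one_iff]
  simp [mul_comm' (g : G ⧸ center G)]

theorem card_centralizer_eq_prime_sq (hG : Nat.card G = p ^ 3) (hnc : ¬ IsMulCommutative G)
    {a : G} (ha : a ∉ center G) : Nat.card (centralizer {a}) = p ^ 2 := by
  have hZ := card_center_eq_prime_of_card_eq_prime_pow_three hG hnc
  obtain ⟨i, hi, hA⟩ :=
    (Nat.dvd_prime_pow hp.out).mp (hG ▸ card_subgroup_dvd_card (centralizer {a}))
  have hZA : center G ≤ centralizer {a} := center_le_centralizer _
  have haA : a ∈ centralizer {a} := mem_centralizer_singleton_iff.mpr rfl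
  have hi1 : 1 ≤ i := by
    have := card_dvd_of_le hZA
    rw [hZ, hA] at this
    exact (Nat.pow_dvd_pow_iff_le_right hp.out.one_lt).mp (by simpa using this)
  have hi1' : i ≠ 1 := fun h => ha <|
    eq_of_le_of_card_ge hZA (by rw [hA, h, hZ, pow_one]) ▸ haA
  have hi3 : i ≠ 3 := by
    intro h
    obtain ⟨b, hb⟩ : ∃ b, b ∉ centralizer {a} := by
      by_contra! hall
      exact ha (mem_center_iff.mpr fun b => (mem_centralizer_singleton_iff.mp (hall b)))
    exact hb (eq_top_of_card_eq _ (by rw [hA, h, hG]) ▸ mem_top b)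
  rw [hA, show i = 2 by omega]

theorem card_quotient_centralizer_eq_prime (hG : Nat.card G = p ^ 3)
    (hnc : ¬ IsMulCommutative G) {a : G} (ha : a ∉ center G) :
    Nat.card (G ⧸ centralizer {a}) = p := by
  have := card_eq_card_quotient_mul_card_subgroup (centralizer {a})
  rw [hG, card_centralizer_eq_prime_sq hG hnc ha, pow_succ, mul_comm] at this
  exact (Nat.eq_of_mul_eq_mul_right (pow_pos hp.out.pos 2) this).symm

end OrderPrimeCube

section CentralCommutators

variable {G : Type*} [Group G]

theorem Subgroup.normal_of_center_le (hcomm : ∀ g h : G, g * h * g⁻¹ * h⁻¹ ∈ center G)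
    {A : Subgroup G} (hZA : center G ≤ A) : A.Normal where
  conj_mem a ha g := by
    simpa using mul_mem (hZA (hcomm g a)) ha

theorem MonoidHom.comp_conjNormal_ne (hcomm : ∀ g h : G, g * h * g⁻¹ * h⁻¹ ∈ center G)
    {M : Type*} [Group M] {A : Subgroup G} [A.Normal]
    (hZA : center G ≤ A) (χ : A →* M) (hχ : Injective (χ.comp (inclusion hZA)))
    {h : G} {b : A} (hb : h * b ≠ b * h) :
    χ.comp (MulAut.conjNormal h).toMonoidHom ≠ χ := by
  intro heq
  have hconj : MulAut.conjNormal h b = inclusion hZA ⟨_, hcomm h b⟩ * b := by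
    ext; simp
  have hχc : χ.comp (inclusion hZA) ⟨_, hcomm h b⟩ = χ.comp (inclusion hZA) 1 := by
    simpa [hconj] using DFunLike.congr_fun heq b
  have := congrArg Subtype.val (hχ hχc)
  simp only [OneMemClass.coe_one] at this
  exact hb (by simpa [mul_inv_eq_one, mul_inv_eq_iff_eq_mul] using this)

end CentralCommutators

theorem CommGroup.exists_monoidHom_comp_injective {p : ℕ} [hp : Fact p.Prime] {Z A : Type*}
    [Group Z] [CommGroup A] [Finite A] (M : Type*) [CommMonoid M]
    [HasEnoughRootsOfUnity M (Monoid.exponent A)] (hZ : Nat.card Z = p) (ι : Z →* A)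
    (hι : Injective ι) : ∃ χ : A →* Mˣ, Injective (χ.comp ι) := by
  have : Fact (Nat.card Z).Prime := hZ ▸ hp
  have : Finite Z := Nat.finite_of_card_ne_zero (hZ ▸ hp.out.ne_zero)
  have : Nontrivial Z := Finite.one_lt_card_iff_nontrivial.mp (hZ ▸ hp.out.one_lt)
  obtain ⟨z, hz⟩ := exists_ne (1 : Z)
  obtain ⟨χ, hχ⟩ := CommGroup.exists_apply_ne_one_of_hasEnoughRootsOfUnity A M
    ((map_ne_one_iff ι hι).mpr hz)
  refine ⟨χ, (MonoidHom.ker_eq_bot_iff _).mp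
    ((χ.comp ι).ker.eq_bot_or_eq_top_of_prime_card.resolve_right fun htop => hχ ?_)⟩
  exact (χ.comp ι).mem_ker.mp (htop ▸ mem_top z)

theorem Submodule.single_mem_of_separating {k I : Type*} [Field k] [Finite I] [DecidableEq I]
    {W : Submodule k (I → k)} (D : Set (I → k)) (hW : ∀ d ∈ D, ∀ f ∈ W, d * f ∈ W) {j : I}
    (hD : ∀ i ≠ j, ∃ d ∈ D, d i ≠ d j) {f : I → k} (hf : f ∈ W) (hfj : f j ≠ 0) :
    Pi.single j 1 ∈ W := by
  have := Fintype.ofFinite I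
  choose! d hdD hd using hD
  -- the functions `g` with `g * W ≤ W` form a monoid, and this product of them vanishes off `j`
  set m : I → k := ∏ i ∈ Finset.univ.erase j, (d i - fun _ => d i i)
  have hmW : m * f ∈ W :=
    Finset.prod_induction _ (fun m => ∀ g ∈ W, m * g ∈ W)
      (fun a b ha hb g hg => mul_assoc a b g ▸ ha _ (hb g hg))
      (fun g hg => (one_mul g).symm ▸ hg)
      (fun i hi g hg => by
        rw [sub_mul]
        exact W.sub_mem (hW _ (hdD i (Finset.ne_of_mem_erase hi)) g hg) (W.smul_mem (d i i) hg))
      f hf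
  have hmj : m j ≠ 0 := by
    simp only [m, Finset.prod_apply, Pi.sub_apply]
    exact Finset.prod_ne_zero_iff.mpr fun i hi =>
      sub_ne_zero.mpr (hd i (Finset.ne_of_mem_erase hi)).symm
  have hm : m * f = (m j * f j) • Pi.single j 1 := by
    ext i
    by_cases hij : i = j
    · subst hij; simp
    · have : m i = 0 := by
        simp only [m, Finset.prod_apply, Pi.sub_apply]
        exact Finset.prod_eq_zero (Finset.mem_erase.mpr ⟨hij, Finset.mem_univ i⟩) (sub_self _)
      simp [this, hij]
  have := W.smul_mem (m j * f j)⁻¹ hmW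
  rwa [hm, smul_smul, inv_mul_cancel₀ (mul_ne_zero hmj hfj), one_smul] at this

theorem QuotientGroup.smul_eq_self_of_mem {G : Type*} [Group G] {A : Subgroup G} [A.Normal]
    {a : G} (ha : a ∈ A) (q : G ⧸ A) : a • q = q := by
  induction q using QuotientGroup.induction_on with
  | H g =>
    rw [MulAction.Quotient.smul_mk, smul_eq_mul, QuotientGroup.eq]
    simpa [mul_assoc] using ‹A.Normal›.conj_mem' _ (inv_mem ha) g

namespace Representation

variable {k G : Type*} [Field k] [Group G] (A : Subgroup G)

-- `x * (x⁻¹ • q).out = q.out * indCharCocycle A x q`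
noncomputable def indCharCocycle (x : G) (q : G ⧸ A) : A :=
  ⟨q.out⁻¹ * x * (x⁻¹ • q).out, by
    rw [show q.out⁻¹ * x = (x⁻¹ * q.out)⁻¹ by group, ← QuotientGroup.eq, QuotientGroup.out_eq',
      ← smul_eq_mul, ← MulAction.Quotient.smul_mk, QuotientGroup.out_eq']⟩

@[simp]
theorem coe_indCharCocycle (x : G) (q : G ⧸ A) :
    (indCharCocycle A x q : G) = q.out⁻¹ * x * (x⁻¹ • q).out := rfl

theorem indCharCocycle_one (q : G ⧸ A) : indCharCocycle A 1 q = 1 := by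
  ext; simp

theorem indCharCocycle_mul (x y : G) (q : G ⧸ A) :
    indCharCocycle A (x * y) q = indCharCocycle A x q * indCharCocycle A y (x⁻¹ • q) := by
  ext; simp [mul_smul, mul_assoc]

variable (χ : A →* kˣ)

noncomputable def indChar : Representation k G (G ⧸ A → k) where
  toFun x :=
    { toFun f q := χ (indCharCocycle A x q) * f (x⁻¹ • q)
      map_add' f g := by ext; simp [mul_add]
      map_smul' c f := by ext; simp [mul_left_comm] }
  map_one' := by ext; simp [indCharCocycle_one]
  map_mul' x y := by ext; simp [indCharCocycle_mul, mul_smul, mul_assoc]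

theorem indChar_apply (x : G) (f : G ⧸ A → k) (q : G ⧸ A) :
    indChar A χ x f q = χ (indCharCocycle A x q) * f (x⁻¹ • q) := rfl

theorem indCharCocycle_of_mem [A.Normal] (a : A) (q : G ⧸ A) :
    indCharCocycle A a q = MulAut.conjNormal q.out⁻¹ a := by
  ext
  rw [coe_indCharCocycle, QuotientGroup.smul_eq_self_of_mem (inv_mem a.2), MulAut.conjNormal_apply,
    inv_inv]

theorem indChar_apply_of_mem [A.Normal] (a : A) (f : G ⧸ A → k) :
    indChar A χ a f = (fun q => (χ (MulAut.conjNormal q.out⁻¹ a) : k)) * f := by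
  ext q
  rw [indChar_apply, indCharCocycle_of_mem, QuotientGroup.smul_eq_self_of_mem (inv_mem a.2)]
  rfl

theorem indChar_apply_single [DecidableEq (G ⧸ A)] (x : G) (q : G ⧸ A) :
    indChar A χ x (Pi.single q 1) = Pi.single (x • q) (χ (indCharCocycle A x (x • q))) := by
  ext q'
  rw [indChar_apply]
  by_cases h : q' = x • q
  · subst h; simp
  · simp [h, inv_smul_eq_iff]

theorem indChar_center [A.Normal] (hZA : center G ≤ A) (z : center G) :
    indChar A χ z = (χ (inclusion hZA z) : k) • 1 := by
  ext f q
  have hconj (g : G) : MulAut.conjNormal g (inclusion hZA z) = inclusion hZA z := by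
    ext
    rw [MulAut.conjNormal_apply, coe_inclusion, mem_center_iff.mp z.2 g, mul_inv_cancel_right]
  rw [show (z : G) = inclusion hZA z from rfl, indChar_apply_of_mem]
  simp only [Pi.mul_apply, hconj]
  rfl

theorem exists_char_conjNormal_ne [A.Normal]
    (hχ : ∀ h ∉ A, χ.comp (MulAut.conjNormal h).toMonoidHom ≠ χ) {q q₀ : G ⧸ A} (hq : q ≠ q₀) :
    ∃ a : A, χ (MulAut.conjNormal q.out⁻¹ a) ≠ χ (MulAut.conjNormal q₀.out⁻¹ a) := by
  have hA : q.out⁻¹ * q₀.out ∉ A := by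
    rwa [← QuotientGroup.eq, QuotientGroup.out_eq', QuotientGroup.out_eq']
  obtain ⟨b, hb⟩ := DFunLike.ne_iff.mp (hχ _ hA)
  refine ⟨MulAut.conjNormal q₀.out b, ?_⟩
  rwa [← MulAut.mul_apply, ← map_mul, ← MulAut.mul_apply, ← map_mul, inv_mul_cancel, map_one,
    MulAut.one_apply]

theorem indChar_irreducible [A.Normal] [Finite (G ⧸ A)]
    (hχ : ∀ h ∉ A, χ.comp (MulAut.conjNormal h).toMonoidHom ≠ χ)
    (W : Submodule k (G ⧸ A → k)) (hW : ∀ g : G, ∀ v ∈ W, indChar A χ g v ∈ W) :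
    W = ⊥ ∨ W = ⊤ := by
  classical
  refine or_iff_not_imp_left.mpr fun hbot => ?_
  obtain ⟨f, hfW, hf0⟩ := W.exists_mem_ne_zero_of_ne_bot hbot
  obtain ⟨q₀, hq₀⟩ := Function.ne_iff.mp hf0
  have hsingle₀ : Pi.single q₀ 1 ∈ W := by
    refine W.single_mem_of_separating
      (Set.range fun a : A => fun q => (χ (MulAut.conjNormal q.out⁻¹ a) : k)) ?_ ?_ hfW hq₀
    · rintro _ ⟨a, rfl⟩ g hg
      simpa [indChar_apply_of_mem] using hW a g hg
    · intro q hq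
      obtain ⟨a, ha⟩ := exists_char_conjNormal_ne A χ hχ hq
      exact ⟨_, ⟨a, rfl⟩, Units.val_injective.ne ha⟩
  have hsingle (q : G ⧸ A) : Pi.single q 1 ∈ W := by
    obtain ⟨x, rfl⟩ := MulAction.exists_smul_eq G q₀ q
    have := W.smul_mem (χ (indCharCocycle A x (x • q₀)))⁻¹.val
      (indChar_apply_single A χ x q₀ ▸ hW x _ hsingle₀)
    simpa [← Pi.single_smul] using this
  rw [eq_top_iff, ← (Pi.basisFun k (G ⧸ A)).span_eq, Submodule.span_le]
  rintro _ ⟨q, rfl⟩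
  simpa using hsingle q

theorem indChar_injective [A.Normal] (hcomm : ∀ g h : G, g * h * g⁻¹ * h⁻¹ ∈ center G)
    (hZA : center G ≤ A) (hχ : Injective (χ.comp (inclusion hZA))) :
    Injective (indChar A χ) := by
  have hcenter (z : center G) (hz : indChar A χ z = 1) : z = 1 := by
    have hχz : χ (inclusion hZA z) = 1 := by
      have := congr_fun (LinearMap.congr_fun hz 1) (1 : G)
      rw [indChar_center A χ hZA] at this
      exact Units.val_eq_one.mp (by simpa using this)
    exact hχ (by simpa using hχz)
  rw [injective_iff_map_eq_one]
  intro x hx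
  have hxker : x ∈ (indChar A χ).ker := hx
  have hxZ : x ∈ center G := mem_center_iff.mpr fun h => by
    have := hcenter ⟨_, hcomm h x⟩
      (mul_mem ((indChar A χ).normal_ker.conj_mem x hxker h) (inv_mem hxker))
    simpa [mul_inv_eq_one, mul_inv_eq_iff_eq_mul] using congrArg Subtype.val this
  simpa using hcenter ⟨x, hxZ⟩ hx

end Representation

theorem Representation.exists_faithful_irreducible_of_linearEquiv {k G V W : Type*} [Field k]
    [Group G] [AddCommGroup V] [Module k V] [AddCommGroup W] [Module k W]
    (ρ : Representation k G V) (e : V ≃ₗ[k] W) (hinj : Injective ρ)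
    (hirr : ∀ U : Submodule k V, (∀ g : G, ∀ v ∈ U, ρ g v ∈ U) → U = ⊥ ∨ U = ⊤) :
    ∃ ρ' : Representation k G W, Injective ρ' ∧
      ∀ U : Submodule k W, (∀ g : G, ∀ v ∈ U, ρ' g v ∈ U) → U = ⊥ ∨ U = ⊤ := by
  refine ⟨(e.conjAlgEquiv k : Module.End k V →* Module.End k W).comp ρ,
    (e.conjAlgEquiv k).injective.comp hinj, fun U hU => ?_⟩
  have hcomap : ∀ g : G, ∀ v ∈ U.comap (e : V →ₗ[k] W), ρ g v ∈ U.comap (e : V →ₗ[k] W) := by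
    intro g v hv
    simpa using hU g (e v) hv
  have := hirr _ hcomap
  rwa [Submodule.comap_equiv_eq_map_symm, Submodule.map_eq_bot_iff,
    Submodule.map_eq_top_iff] at this

theorem statement_15_general (p : ℕ) (hp : p.Prime)
    (k : Type) [Field k]
    (ζ : k) (hζ : IsPrimitiveRoot ζ (p ^ 2))
    (G : Type) [Group G] [Finite G] (hcard : Nat.card G = p ^ 3)
    (hnab : ¬ ∀ a b : G, a * b = b * a) :
    ∃ ρ : Representation k G (Fin p → k),
      Function.Injective ρ ∧
      ∀ W : Submodule k (Fin p → k), (∀ g : G, ∀ v ∈ W, ρ g v ∈ W) → W = ⊥ ∨ W = ⊤ := by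
  have : Fact p.Prime := ⟨hp⟩
  have hnc : ¬ IsMulCommutative G := mt isMulCommutative_iff.mp hnab
  have hcomm := commutator_mem_center_of_card_eq_prime_pow_three hcard hnc
  obtain ⟨a, ha⟩ : ∃ a, a ∉ center G := by
    by_contra! h
    exact hnc (center_eq_top_iff.mp (eq_top_iff.mpr fun a _ => h a))
  set A := centralizer {a}
  have hZA : center G ≤ A := center_le_centralizer _
  have hA : Nat.card A = p ^ 2 := card_centralizer_eq_prime_sq hcard hnc ha
  have : A.Normal := normal_of_center_le hcomm hZA
  let : CommGroup A := IsPGroup.commGroupOfCardEqPrimeSq hA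
  have : HasEnoughRootsOfUnity k (p ^ 2) := ⟨⟨ζ, hζ⟩, inferInstance⟩
  have : HasEnoughRootsOfUnity k (Monoid.exponent A) :=
    HasEnoughRootsOfUnity.of_dvd k (hA ▸ Group.exponent_dvd_nat_card)
  obtain ⟨χ, hχ⟩ := CommGroup.exists_monoidHom_comp_injective k
    (card_center_eq_prime_of_card_eq_prime_pow_three hcard hnc) (inclusion hZA)
    (inclusion_injective hZA)
  have e := Finite.equivFinOfCardEq (card_quotient_centralizer_eq_prime hcard hnc ha)
  refine (Representation.indChar A χ).exists_faithful_irreducible_of_linearEquiv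
    (LinearEquiv.funCongrLeft k k e.symm) (Representation.indChar_injective A χ hcomm hZA hχ)
    (Representation.indChar_irreducible A χ fun h hh => ?_)
  exact MonoidHom.comp_conjNormal_ne hcomm hZA χ hχ
    (b := ⟨a, mem_centralizer_singleton_iff.mpr rfl⟩)
    (fun hab => hh (mem_centralizer_singleton_iff.mpr hab))

/-- every non-abelian group of order `p³` has a faithful irreducible
`k`-linear representation of dimension `p` (realized on `k^p`), for `k` a field of
characteristic `≠ p` containing a primitive `p²`-th root of unity. -/
theorem statement_15 (p : ℕ) (hp : p.Prime)
    (k : Type) [Field k] (hchar : ringChar k ≠ p)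
    (ζ : k) (hζ : IsPrimitiveRoot ζ (p ^ 2))
    (G : Type) [Group G] [Finite G] (hcard : Nat.card G = p ^ 3)
    (hnab : ¬ ∀ a b : G, a * b = b * a) :
    ∃ ρ : Representation k G (Fin p → k),
      Function.Injective ρ ∧
      ∀ W : Submodule k (Fin p → k), (∀ g : G, ∀ v ∈ W, ρ g v ∈ W) → W = ⊥ ∨ W = ⊤ :=
  statement_15_general p hp k ζ hζ G hcard hnab
end

section
/- Let p be a prime and let k be a field. In the field of fractions of the polynomial ring k[w_1,…,w_{p−1}], set W_0 = 1 + w_1 + w_1w_2 + ⋯ + w_1w_2⋯w_{p−1}, and for 0 ≤ i ≤ p−1 set s_i = (w_1⋯w_i)/W_0, where the empty product is 1 (so s_0 = 1/W_0). Then s_0 + s_1 + ⋯ + s_{p−1} = 1, and the k-subalgebra of the fraction field generated by w_1^{±1},…,w_{p−1}^{±1} and W_0^{−1} equals the k-subalgebra generated by s_0^{±1}, s_1^{±1}, …, s_{p−1}^{±1}. -/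
/-!
Writing `P i = w₁ ⋯ w_i`, so that `W₀ = ∑ P i` and `s_i = P i / W₀`, the `s_i` sum to `1`
trivially. The two generating sets determine each other multiplicatively:
`s_i = P i · W₀⁻¹` and `s_i⁻¹ = W₀ · (P i)⁻¹` with `W₀` a sum of monomials in the `w_j`, while
`w_{j+1} = s_{j+1} / s_j` and `W₀⁻¹ = s₀`. The latter needs `s_j ≠ 0`, i.e. `W₀ ≠ 0`, which holds
because `W₀` has constant term `1`.
-/

open Finset

section PrefixProd

variable {M : Type*} {n : ℕ}

/-- The paper's `w_1 ⋯ w_i`, with `w_{j+1}` stored as `w j`; constant for `i ≥ n`. -/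
def prefixProd [CommMonoid M] (w : Fin n → M) (i : ℕ) : M :=
  ∏ j ∈ univ.filter (fun j : Fin n => (j : ℕ) < i), w j

def prefixProdSum [CommSemiring M] (w : Fin n → M) : M :=
  ∑ i ∈ range (n + 1), prefixProd w i

section CommMonoid

variable [CommMonoid M]

@[simp]
theorem prefixProd_zero (w : Fin n → M) : prefixProd w 0 = 1 := by
  simp [prefixProd]

theorem prefixProd_succ (w : Fin n → M) (j : Fin n) :
    prefixProd w (j + 1) = prefixProd w j * w j := by
  have hfilter : univ.filter (fun j' : Fin n => (j' : ℕ) < j + 1) =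
      insert j (univ.filter (fun j' : Fin n => (j' : ℕ) < j)) := by
    ext j'
    simp only [mem_filter, mem_univ, true_and, mem_insert, Fin.ext_iff]
    omega
  rw [prefixProd, hfilter, prod_insert (by simp), mul_comm]
  rfl

theorem map_prefixProd {N F : Type*} [CommMonoid N] [FunLike F M N] [MonoidHomClass F M N]
    (f : F) (w : Fin n → M) (i : ℕ) : f (prefixProd w i) = prefixProd (f ∘ w) i :=
  map_prod f _ _

end CommMonoid

theorem prefixProd_inv [DivisionCommMonoid M] (w : Fin n → M) (i : ℕ) :
    (prefixProd w i)⁻¹ = prefixProd (fun j => (w j)⁻¹) i :=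
  (prod_inv_distrib _).symm

theorem prefixProd_ne_zero [CommMonoidWithZero M] [NoZeroDivisors M] [Nontrivial M]
    {w : Fin n → M} (hw : ∀ j, w j ≠ 0) (i : ℕ) : prefixProd w i ≠ 0 :=
  prod_ne_zero_iff.2 fun j _ => hw j

@[simp]
theorem prefixProdSum_zero [CommSemiring M] : prefixProdSum (0 : Fin n → M) = 1 := by
  rw [prefixProdSum, sum_range_succ', prefixProd_zero, sum_eq_zero, zero_add]
  intro i hi
  rw [show i = (⟨i, mem_range.1 hi⟩ : Fin n) from rfl, prefixProd_succ, Pi.zero_apply, mul_zero]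

theorem map_prefixProdSum {R S F : Type*} [CommSemiring R] [CommSemiring S] [FunLike F R S]
    [RingHomClass F R S] (f : F) (w : Fin n → R) : f (prefixProdSum w) = prefixProdSum (f ∘ w) := by
  simp only [prefixProdSum, map_sum, map_prefixProd]

end PrefixProd

theorem MvPolynomial.constantCoeff_prefixProdSum_X {R : Type*} [CommSemiring R] {n : ℕ} :
    constantCoeff (prefixProdSum (X : Fin n → MvPolynomial (Fin n) R)) = 1 := by
  rw [map_prefixProdSum]
  convert prefixProdSum_zero
  ext j
  exact constantCoeff_X (R := R) j

section Field

variable {k K : Type*} [CommSemiring k] [Field K] [Algebra k K] {n : ℕ} {w : Fin n → K}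
  {s : ℕ → K}

theorem sum_range_prefixProd_div_prefixProdSum (hW : prefixProdSum w ≠ 0)
    (hs : ∀ i, s i = prefixProd w i / prefixProdSum w) : ∑ i ∈ range (n + 1), s i = 1 := by
  rw [sum_congr rfl fun i _ => hs i, ← sum_div, ← prefixProdSum, div_self hW]

theorem adjoin_prefixProd_div_le (hs : ∀ i, s i = prefixProd w i / prefixProdSum w) :
    Algebra.adjoin k {x | ∃ i ∈ range (n + 1), x = s i ∨ x = (s i)⁻¹} ≤
      Algebra.adjoin k ({x | ∃ j, x = w j ∨ x = (w j)⁻¹} ∪ {(prefixProdSum w)⁻¹}) := by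
  set A := Algebra.adjoin k ({x | ∃ j, x = w j ∨ x = (w j)⁻¹} ∪ {(prefixProdSum w)⁻¹})
  have hw : ∀ j, w j ∈ A := fun j => Algebra.subset_adjoin (Or.inl ⟨j, Or.inl rfl⟩)
  have hw_inv : ∀ j, (w j)⁻¹ ∈ A := fun j => Algebra.subset_adjoin (Or.inl ⟨j, Or.inr rfl⟩)
  have hW_inv : (prefixProdSum w)⁻¹ ∈ A := Algebra.subset_adjoin (Or.inr rfl)
  have hP : ∀ i, prefixProd w i ∈ A := fun i => prod_mem fun j _ => hw j
  have hP_inv : ∀ i, (prefixProd w i)⁻¹ ∈ A := fun i => by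
    rw [prefixProd_inv]
    exact prod_mem fun j _ => hw_inv j
  have hW : prefixProdSum w ∈ A := sum_mem fun i _ => hP i
  refine Algebra.adjoin_le ?_
  rintro x ⟨i, -, rfl | rfl⟩
  · rw [hs, div_eq_mul_inv]
    exact mul_mem (hP i) hW_inv
  · rw [hs, inv_div, div_eq_mul_inv]
    exact mul_mem hW (hP_inv i)

theorem le_adjoin_prefixProd_div (hw : ∀ j, w j ≠ 0) (hW : prefixProdSum w ≠ 0)
    (hs : ∀ i, s i = prefixProd w i / prefixProdSum w) :
    Algebra.adjoin k ({x | ∃ j, x = w j ∨ x = (w j)⁻¹} ∪ {(prefixProdSum w)⁻¹}) ≤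
      Algebra.adjoin k {x | ∃ i ∈ range (n + 1), x = s i ∨ x = (s i)⁻¹} := by
  set B := Algebra.adjoin k {x | ∃ i ∈ range (n + 1), x = s i ∨ x = (s i)⁻¹}
  have hs_mem : ∀ i ≤ n, s i ∈ B := fun i hi =>
    Algebra.subset_adjoin ⟨i, mem_range.2 (Nat.lt_succ_of_le hi), Or.inl rfl⟩
  have hs_inv_mem : ∀ i ≤ n, (s i)⁻¹ ∈ B := fun i hi =>
    Algebra.subset_adjoin ⟨i, mem_range.2 (Nat.lt_succ_of_le hi), Or.inr rfl⟩
  have hs_ne : ∀ i, s i ≠ 0 := fun i => by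
    rw [hs]
    exact div_ne_zero (prefixProd_ne_zero hw i) hW
  have hs_succ : ∀ j : Fin n, s (j + 1) = s j * w j := fun j => by
    rw [hs, hs, prefixProd_succ, mul_div_right_comm]
  refine Algebra.adjoin_le ?_
  rintro x (⟨j, rfl | rfl⟩ | rfl)
  · have hw_eq : w j = s (j + 1) * (s j)⁻¹ := by
      rw [hs_succ, mul_right_comm, mul_inv_cancel₀ (hs_ne j), one_mul]
    rw [hw_eq]
    exact mul_mem (hs_mem _ j.isLt) (hs_inv_mem _ j.isLt.le)
  · have hw_inv_eq : (w j)⁻¹ = s j * (s (j + 1))⁻¹ := by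
      rw [hs_succ, mul_inv, mul_inv_cancel_left₀ (hs_ne j)]
    rw [hw_inv_eq]
    exact mul_mem (hs_mem _ j.isLt.le) (hs_inv_mem _ j.isLt)
  · rw [← one_div, ← prefixProd_zero w, ← hs]
    exact hs_mem 0 (Nat.zero_le n)

end Field

/-- in the fraction field of `k[w_1, …, w_{p-1}]`, with
`W₀ = 1 + w_1 + w_1 w_2 + ⋯ + w_1 ⋯ w_{p-1}` and `s_i = (w_1 ⋯ w_i)/W₀` for
`0 ≤ i ≤ p-1`, one has `s_0 + ⋯ + s_{p-1} = 1`, and the `k`-subalgebra generated by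
`w_1^{±1}, …, w_{p-1}^{±1}, W₀⁻¹` equals the `k`-subalgebra generated by
`s_0^{±1}, …, s_{p-1}^{±1}`.  (Variables are indexed by `Fin (p-1)`, index `j` ↔
`w_{j+1}`.) -/
theorem statement_16 (p : ℕ) (hp : p.Prime) (k : Type) [Field k]
    (w : Fin (p - 1) → FractionRing (MvPolynomial (Fin (p - 1)) k))
    (hw : ∀ j, w j = algebraMap (MvPolynomial (Fin (p - 1)) k) _ (MvPolynomial.X j))
    (W₀ : FractionRing (MvPolynomial (Fin (p - 1)) k))
    (hW₀ : W₀ = ∑ i ∈ Finset.range p,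
      ∏ j ∈ Finset.univ.filter (fun j : Fin (p - 1) => (j : ℕ) < i), w j)
    (s : ℕ → FractionRing (MvPolynomial (Fin (p - 1)) k))
    (hs : ∀ i, s i =
      (∏ j ∈ Finset.univ.filter (fun j : Fin (p - 1) => (j : ℕ) < i), w j) / W₀) :
    (∑ i ∈ Finset.range p, s i) = 1 ∧
    Algebra.adjoin k ({x | ∃ j : Fin (p - 1), x = w j ∨ x = (w j)⁻¹} ∪ {W₀⁻¹}) =
      Algebra.adjoin k {x | ∃ i ∈ Finset.range p, x = s i ∨ x = (s i)⁻¹} := by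
  have hrange : range p = range (p - 1 + 1) := by rw [Nat.sub_add_cancel hp.one_le]
  replace hW₀ : W₀ = prefixProdSum w := by rw [hW₀, hrange]; rfl
  subst hW₀
  rw [hrange]
  have hinj := IsFractionRing.injective (MvPolynomial (Fin (p - 1)) k)
    (FractionRing (MvPolynomial (Fin (p - 1)) k))
  have hw_ne : ∀ j, w j ≠ 0 := fun j => by
    rw [hw, map_ne_zero_iff _ hinj]
    exact MvPolynomial.X_ne_zero j
  have hW_ne : prefixProdSum w ≠ 0 := by
    rw [show w = algebraMap _ _ ∘ MvPolynomial.X from funext hw, ← map_prefixProdSum,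
      map_ne_zero_iff _ hinj]
    intro h
    simpa [h] using MvPolynomial.constantCoeff_prefixProdSum_X (R := k) (n := p - 1)
  exact ⟨sum_range_prefixProd_div_prefixProdSum hW_ne hs,
    le_antisymm (le_adjoin_prefixProd_div hw_ne hW_ne hs) (adjoin_prefixProd_div_le hs)⟩
end
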